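/- arXiv:2011.13513 — 7 statements merged into one kernel-verified Lean document; each statement's English description precedes it below -/
import Mathlib

section
/- Let h ≥ 2, let X be a countably infinite set, and let 𝒜 be a set of finite subsets of X. For a finite subset S of X, let g(S) be the number of ordered h-tuples (A_1,...,A_h) of pairwise disjoint members of 𝒜 whose union is S. Suppose there is an infinite set W of positive integers such that for every n ∈ W, all but finitely many n-element subsets S of X satisfy g(S) ≥ 1. Then for every integer n there exists a finite subset S of X with g(S) ≥ n. -/
/-!
Fix `n ∈ W` large. Discarding the finitely many points of `X` that lie in an unrepresentable
`n`-set leaves an infinite `Y` all of whose `n`-subsets are representable; enumerate `Y` by `ℕ`.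
Colour each `n`-set by its pattern: which part contains its `k`-th smallest element. By Ramsey's
theorem the pattern is a constant `P` on an infinite set, and after re-enumerating, the sets
`σ '' P i` form a representation for every increasing `σ : Fin n → ℕ`.

If some class `K = P i₀` is proper we may take it of size `p ≤ n / 2`. Its elements and those of
its complement can then be placed independently on `n, 2n, …, n²`: part `i₀` takes the block
`n (t + 1), …, n (t + p)` and the remaining parts share the rest, which gives `n - p + 1`
representations of one set. If `P` is constant, all other parts are empty and every `n`-set is
in `𝒜`, so a `2n`-set splits into two `n`-sets in `n + 1` ways.
-/

open Finset Function

section Repr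

variable {α β ι : Type*} [DecidableEq α] [Fintype ι]

def IsRepr (𝒜 : Set (Finset α)) (S : Finset α) (f : ι → Finset α) : Prop :=
  (∀ i, f i ∈ 𝒜) ∧ Pairwise (Disjoint on f) ∧ univ.biUnion f = S

variable {𝒜 : Set (Finset α)} {S : Finset α} {f : ι → Finset α}

theorem IsRepr.subset (hf : IsRepr 𝒜 S f) (i : ι) : f i ⊆ S :=
  hf.2.2 ▸ subset_biUnion_of_mem f (mem_univ i)

theorem finite_setOf_isRepr (𝒜 : Set (Finset α)) (S : Finset α) :
    {f : ι → Finset α | IsRepr 𝒜 S f}.Finite :=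
  (Set.Finite.pi fun _ => S.powerset.finite_toSet).subset fun _ hf i _ =>
    mem_powerset.2 (hf.subset i)

theorem IsRepr.update [DecidableEq ι] (hf : IsRepr 𝒜 S f) {i : ι} {A : Finset α}
    (hA : A ∈ 𝒜) (hAS : Disjoint A (S \ f i)) :
    IsRepr 𝒜 (A ∪ (S \ f i)) (Function.update f i A) := by
  have hdisj : ∀ j, j ≠ i → Disjoint A (f j) := fun j hj =>
    hAS.mono_right (subset_sdiff.2 ⟨hf.subset j, hf.2.1 hj⟩)
  refine ⟨fun j => ?_, fun j k hjk =>
    show Disjoint (Function.update f i A j) (Function.update f i A k) from ?_, ?_⟩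
  · rcases eq_or_ne j i with rfl | hj
    · simpa using hA
    · simpa [hj] using hf.1 j
  · rcases eq_or_ne j i with rfl | hj
    · simpa [hjk.symm] using hdisj k hjk.symm
    rcases eq_or_ne k i with rfl | hk
    · simpa [hj] using (hdisj j hj).symm
    simpa [hj, hk] using hf.2.1 hjk
  · ext x
    simp only [mem_biUnion, mem_univ, true_and, mem_union, mem_sdiff, ← hf.2.2]
    constructor
    · rintro ⟨j, hj⟩
      rcases eq_or_ne j i with rfl | hji
      · simp_all
      · simp only [update_of_ne hji] at hj
        exact Or.inr ⟨⟨j, hj⟩, fun hi => Finset.disjoint_left.1 (hf.2.1 hji) hj hi⟩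
    · rintro (hx | ⟨⟨j, hj⟩, hxi⟩)
      · exact ⟨i, by simpa using hx⟩
      · have hji : j ≠ i := by rintro rfl; exact hxi hj
        exact ⟨j, by simpa [hji] using hj⟩

theorem le_ncard_setOf_isRepr {I : Finset β} {a : β → Finset α} (ha : Set.InjOn a I) (i : ι)
    (hI : ∀ t ∈ I, ∃ f, IsRepr 𝒜 S f ∧ f i = a t) :
    #I ≤ {f : ι → Finset α | IsRepr 𝒜 S f}.ncard := by
  choose! F hF hFi using hI
  rw [← Set.ncard_coe_finset]
  refine Set.ncard_le_ncard_of_injOn F hF (fun t ht u hu htu => ha ht hu ?_)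
    (finite_setOf_isRepr 𝒜 S)
  rw [← hFi t ht, ← hFi u hu, htu]

theorem isRepr_map_iff [DecidableEq β] (e : β ↪ α) {S : Finset β} {f : ι → Finset β} :
    IsRepr 𝒜 (S.map e) (fun i => (f i).map e) ↔ IsRepr {B | B.map e ∈ 𝒜} S f := by
  have hunion : univ.biUnion (fun i => (f i).map e) = (univ.biUnion f).map e := by
    simp only [map_eq_image, biUnion_image]
  simp only [IsRepr, hunion, map_inj, Pairwise, onFun, disjoint_map, Set.mem_ofPred_eq]

theorem IsRepr.exists_comap [DecidableEq β] (e : β ↪ α) {S : Finset β}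
    (hf : IsRepr 𝒜 (S.map e) f) :
    ∃ f' : ι → Finset β, IsRepr {B | B.map e ∈ 𝒜} S f' := by
  choose f' _ hf' using fun i => subset_map_iff.1 (hf.subset i)
  refine ⟨f', (isRepr_map_iff e).1 ?_⟩
  rwa [← funext hf']

theorem ncard_setOf_isRepr_comap_le [DecidableEq β] (e : β ↪ α) (S : Finset β) :
    {f : ι → Finset β | IsRepr {B | B.map e ∈ 𝒜} S f}.ncard ≤
      {f : ι → Finset α | IsRepr 𝒜 (S.map e) f}.ncard :=
  Set.ncard_le_ncard_of_injOn (fun f i => (f i).map e) (fun _ hf => (isRepr_map_iff e).2 hf)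
    (fun _ _ _ _ h => funext fun i => map_injective e (congrFun h i))
    (finite_setOf_isRepr 𝒜 (S.map e))

end Repr

section Ramsey

variable {C : Type*} {n : ℕ}

theorem exists_strictMono_forall_insert
    (ih : ∀ (c : Finset ℕ → C) (Z : Set ℕ), Z.Infinite →
      ∃ Y ⊆ Z, Y.Infinite ∧ ∃ k, ∀ s : Finset ℕ, ↑s ⊆ Y → #s = n → c s = k)
    (c : Finset ℕ → C) {Z : Set ℕ} (hZ : Z.Infinite) :
    ∃ a : ℕ → ℕ, StrictMono a ∧ (∀ i, a i ∈ Z) ∧ ∃ col : ℕ → C,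
      ∀ i (s : Finset ℕ), ↑s ⊆ a '' Set.Ioi i → #s = n → c (insert (a i) s) = col i := by
  choose F hFsub hFinf K hK using ih
  let cut (S : {S : Set ℕ // S.Infinite}) : {S : Set ℕ // S.Infinite} :=
    ⟨S.1 \ {sInf S.1}, S.2.sdiff (Set.finite_singleton _)⟩
  let step (S : {S : Set ℕ // S.Infinite}) : {S : Set ℕ // S.Infinite} :=
    ⟨F (fun s => c (insert (sInf S.1) s)) (cut S).1 (cut S).2, hFinf _ _ _⟩
  let seq (i : ℕ) : {S : Set ℕ // S.Infinite} := step^[i] ⟨Z, hZ⟩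
  let a (i : ℕ) : ℕ := sInf (seq i).1
  have hstep (i : ℕ) : (seq (i + 1)).1 = F (fun s => c (insert (a i) s)) (cut (seq i)).1
      (cut (seq i)).2 := by
    simp only [seq, iterate_succ_apply']
    rfl
  have hseq (i : ℕ) : (seq (i + 1)).1 ⊆ (cut (seq i)).1 := hstep i ▸ hFsub _ _ _
  have hanti : Antitone fun i => (seq i).1 :=
    antitone_nat_of_succ_le fun i => (hseq i).trans Set.sdiff_subset
  have hmem (i : ℕ) : a i ∈ (seq i).1 := Nat.sInf_mem (seq i).2.nonempty
  have ha : StrictMono a := strictMono_nat_of_lt_succ fun i => by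
    obtain ⟨hle, hne⟩ := hseq i (hmem (i + 1))
    exact lt_of_le_of_ne (Nat.sInf_le hle) (Ne.symm hne)
  refine ⟨a, ha, fun i => hanti (Nat.zero_le i) (hmem i),
    fun i => K (fun s => c (insert (a i) s)) (cut (seq i)).1 (cut (seq i)).2,
    fun i s hs hcard => hK (fun s => c (insert (a i) s)) _ _ s ?_ hcard⟩
  rw [← hstep]
  rintro _ hx
  obtain ⟨j, hij, rfl⟩ := hs hx
  exact hanti (Nat.succ_le_of_lt hij) (hmem j)

theorem ramsey_infinite [Finite C] (n : ℕ) (c : Finset ℕ → C) {Z : Set ℕ} (hZ : Z.Infinite) :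
    ∃ Y ⊆ Z, Y.Infinite ∧ ∃ k, ∀ s : Finset ℕ, ↑s ⊆ Y → #s = n → c s = k := by
  induction n generalizing c Z with
  | zero => exact ⟨Z, subset_rfl, hZ, c ∅, fun s _ hs => by rw [card_eq_zero.1 hs]⟩
  | succ n ih =>
    obtain ⟨a, ha, haZ, col, hcol⟩ :=
      exists_strictMono_forall_insert (fun c Z hZ => ih c hZ) c hZ
    obtain ⟨k, hk⟩ := Finite.exists_infinite_fiber col
    refine ⟨a '' (col ⁻¹' {k}), Set.image_subset_iff.2 fun i _ => haZ i,
      (Set.infinite_coe_iff.1 hk).image ha.injective.injOn, k, fun s hsY hcard => ?_⟩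
    have hne : s.Nonempty := card_pos.1 (by omega)
    obtain ⟨i, hik, hi⟩ := hsY (s.min'_mem hne)
    have hrest : ↑(s.erase (a i)) ⊆ a '' Set.Ioi i := by
      intro y hy
      obtain ⟨hyne, hys⟩ := mem_erase.1 hy
      obtain ⟨j, -, rfl⟩ := hsY hys
      refine ⟨j, ha.lt_iff_lt.1 ?_, rfl⟩
      exact lt_of_le_of_ne (hi ▸ s.min'_le _ hys) (Ne.symm hyne)
    rw [← insert_erase (hi ▸ s.min'_mem hne : a i ∈ s),
      hcol i _ hrest (by rw [card_erase_of_mem (hi ▸ s.min'_mem hne), hcard]; rfl)]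
    exact hik

end Ramsey

section Spread

variable {n : ℕ}

/-- Sends the elements of `K`, in increasing order, to `n * e 1, …, n * e #K`, and an element `k`
outside `K` with `r` elements of `K` below it to `n * e r + k + 1`, strictly between the images of
its neighbours in `K`. -/
def spread (K : Finset (Fin n)) (e : ℕ → ℕ) (k : Fin n) : ℕ :=
  n * e #{j ∈ K | j ≤ k} + if k ∈ K then 0 else (k : ℕ) + 1

theorem card_filter_le_le_of_le (K : Finset (Fin n)) {j k : Fin n} (hjk : j ≤ k) :
    #{x ∈ K | x ≤ j} ≤ #{x ∈ K | x ≤ k} :=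
  card_le_card (monotone_filter_right K fun _ _ hx => hx.trans hjk)

theorem card_filter_le_lt_of_lt_of_mem (K : Finset (Fin n)) {j k : Fin n} (hjk : j < k)
    (hk : k ∈ K) :
    #{x ∈ K | x ≤ j} < #{x ∈ K | x ≤ k} := by
  refine card_lt_card ⟨monotone_filter_right K fun _ _ hx => hx.trans hjk.le, fun h => ?_⟩
  exact (mem_filter.1 (h (mem_filter.2 ⟨hk, le_rfl⟩))).2.not_gt hjk

theorem strictMono_spread (K : Finset (Fin n)) {e : ℕ → ℕ} (he : StrictMono e) :
    StrictMono (spread K e) := by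
  intro j k hjk
  have hjk' : (j : ℕ) < k := hjk
  have hkn : (k : ℕ) < n := k.2
  have hj : spread K e j ≤ n * e #{x ∈ K | x ≤ j} + (j + 1) := by
    unfold spread; split_ifs <;> omega
  rcases (card_filter_le_le_of_le K hjk.le).lt_or_eq with hlt | heq
  · have hstep : n * (e #{x ∈ K | x ≤ j} + 1) ≤ n * e #{x ∈ K | x ≤ k} :=
      Nat.mul_le_mul_left n (he hlt)
    have hk : n * e #{x ∈ K | x ≤ k} ≤ spread K e k := Nat.le_add_right _ _
    rw [Nat.mul_succ] at hstep
    omega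
  · have hkK : k ∉ K := fun hk => (card_filter_le_lt_of_lt_of_mem K hjk hk).ne heq
    have hk : spread K e k = n * e #{x ∈ K | x ≤ j} + (k + 1) := by simp [spread, hkK, heq]
    omega

theorem image_spread (K : Finset (Fin n)) (e : ℕ → ℕ) :
    K.image (spread K e) = ((Icc 1 #K).image e).image (n * ·) := by
  have hrank : K.image (fun k => #{j ∈ K | j ≤ k}) = Icc 1 #K := by
    refine eq_of_subset_of_card_le (fun c hc => ?_) ?_
    · obtain ⟨k, hk, rfl⟩ := mem_image.1 hc
      exact mem_Icc.2
        ⟨card_pos.2 ⟨k, mem_filter.2 ⟨hk, le_rfl⟩⟩, card_le_card (filter_subset _ _)⟩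
    · rw [Nat.card_Icc, card_image_of_injOn]
      · omega
      · intro j hj k hk hjk
        by_contra hne
        rcases lt_or_gt_of_ne hne with h | h
        · exact (card_filter_le_lt_of_lt_of_mem K h hk).ne hjk
        · exact (card_filter_le_lt_of_lt_of_mem K h hj).ne' hjk
  rw [← hrank, image_image, image_image]
  exact image_congr fun k hk => by simp [spread, mem_coe.1 hk]

def gap (t p c : ℕ) : ℕ := if c ≤ t then c else c + p

theorem strictMono_gap (t p : ℕ) : StrictMono (gap t p) := by
  intro a b hab
  unfold gap
  split_ifs <;> omega

theorem disjoint_image_add_image_gap (t p q : ℕ) :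
    Disjoint ((Icc 1 p).image (· + t)) ((Icc 1 q).image (gap t p)) := by
  simp only [disjoint_left, mem_image, mem_Icc, not_exists, not_and]
  rintro _ ⟨a, ha, rfl⟩ b hb
  unfold gap
  split_ifs <;> omega

theorem image_add_union_image_gap {t q : ℕ} (p : ℕ) (ht : t ≤ q) :
    (Icc 1 p).image (· + t) ∪ (Icc 1 q).image (gap t p) = Icc 1 (p + q) := by
  ext x
  simp only [mem_union, mem_image, mem_Icc]
  constructor
  · rintro (⟨a, ha, rfl⟩ | ⟨b, hb, rfl⟩)
    · omega
    · unfold gap; split_ifs <;> omega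
  · intro hx
    by_cases hlo : x ≤ t
    · exact Or.inr ⟨x, by omega, if_pos hlo⟩
    by_cases hhi : x ≤ t + p
    · exact Or.inl ⟨x - t, by omega, by omega⟩
    · exact Or.inr ⟨x - p, by omega, by unfold gap; rw [if_neg (by omega)]; omega⟩

theorem injective_image_Icc_add {p : ℕ} (hp : 0 < p) :
    Injective fun t => (Icc 1 p).image (· + t) := by
  intro t u h
  simp only [image_add_right_Icc] at h
  have htu := h ▸ left_mem_Icc.2 (by omega : 1 + t ≤ p + t)
  have hut := h.symm ▸ left_mem_Icc.2 (by omega : 1 + u ≤ p + u)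
  rw [mem_Icc] at htu hut
  omega

end Spread

section Pattern

variable {ι : Type*} [Fintype ι] {n : ℕ}

def IsPattern (ℬ : Set (Finset ℕ)) (P : ι → Finset (Fin n)) : Prop :=
  ∀ σ : Fin n → ℕ, StrictMono σ → IsRepr ℬ (univ.image σ) fun i => (P i).image σ

variable {ℬ : Set (Finset ℕ)} {P : ι → Finset (Fin n)}

theorem IsPattern.disjoint (hP : IsPattern ℬ P) : Pairwise (Disjoint on P) := fun _ _ hij =>
  (disjoint_image Fin.val_injective).1 ((hP _ Fin.val_strictMono).2.1 hij)

theorem IsPattern.exists_mem (hP : IsPattern ℬ P) (k : Fin n) : ∃ i, k ∈ P i := by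
  have hk : (k : ℕ) ∈ univ.biUnion fun i => (P i).image Fin.val := by
    rw [(hP _ Fin.val_strictMono).2.2]
    exact mem_image_of_mem _ (mem_univ k)
  obtain ⟨i, -, hi⟩ := mem_biUnion.1 hk
  exact ⟨i, Fin.val_injective.mem_finset_image.1 hi⟩

theorem exists_isPattern (n : ℕ)
    (hℬ : ∀ s : Finset ℕ, #s = n → ∃ f : ι → Finset ℕ, IsRepr ℬ s f) :
    ∃ (e : ℕ ↪o ℕ) (P : ι → Finset (Fin n)),
      IsPattern {B | B.map e.toEmbedding ∈ ℬ} P := by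
  classical
  let rep (s : Finset ℕ) : ι → Finset ℕ := Classical.epsilon (IsRepr ℬ s)
  let col (s : Finset ℕ) : ι → Finset (Fin n) :=
    if hs : #s = n then fun i => {k | s.orderEmbOfFin hs k ∈ rep s i} else fun _ => ∅
  obtain ⟨Z, -, hZ, P, hP⟩ := ramsey_infinite n col Set.infinite_univ
  have : Infinite Z := hZ.to_subtype
  let e := Nat.orderEmbeddingOfSet Z
  refine ⟨e, P, fun σ hσ => (isRepr_map_iff _).1 ?_⟩
  have hτ : StrictMono (e ∘ σ) := e.strictMono.comp hσ
  set s := univ.image (e ∘ σ)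
  have hs : #s = n := by rw [card_image_of_injective _ hτ.injective, card_univ, Fintype.card_fin]
  have hsZ : ↑s ⊆ Z := by
    intro x hx
    obtain ⟨k, -, rfl⟩ := mem_image.1 hx
    rw [← Nat.orderEmbeddingOfSet_range Z]
    exact ⟨σ k, rfl⟩
  have hrep : IsRepr ℬ s (rep s) := Classical.epsilon_spec (hℬ s hs)
  have hsort : ⇑(s.orderEmbOfFin hs) = e ∘ σ :=
    (orderEmbOfFin_unique hs (fun k => mem_image_of_mem _ (mem_univ k)) hτ).symm
  have hparts (i : ι) : rep s i = (P i).image (e ∘ σ) := by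
    rw [← hP s hsZ hs]
    simp only [col, hs, dif_pos, hsort]
    rw [← filter_image (p := (· ∈ rep s i)), filter_mem_eq_inter,
      inter_eq_right.2 (hrep.subset i)]
  simpa only [map_eq_image, image_image, RelEmbedding.coe_toEmbedding, ← hparts] using hrep

theorem IsPattern.exists_isRepr [DecidableEq ι] (hP : IsPattern ℬ P) (hn : 0 < n) (i₀ : ι)
    {t : ℕ} (ht : t ≤ n - #(P i₀)) :
    ∃ f, IsRepr ℬ ((Icc 1 n).image (n * ·)) f ∧
      f i₀ = ((Icc 1 #(P i₀)).image (· + t)).image (n * ·) := by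
  set K := P i₀
  have hKc : #Kᶜ = n - #K := by rw [card_compl, Fintype.card_fin]
  have hσ := strictMono_spread K (e := (· + t)) fun _ _ h => by simpa using h
  have hτ := strictMono_spread Kᶜ (strictMono_gap t #K)
  have hrest : univ.image (spread Kᶜ (gap t #K)) \ K.image (spread Kᶜ (gap t #K)) =
      ((Icc 1 (n - #K)).image (gap t #K)).image (n * ·) := by
    rw [← image_sdiff _ _ hτ.injective, ← compl_eq_univ_sdiff, image_spread, hKc]
  have hA : K.image (spread K (· + t)) ∈ ℬ := (hP _ hσ).1 i₀
  have hrepr := (hP _ hτ).update (i := i₀) hA (by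
    rw [hrest, image_spread]
    exact (disjoint_image (mul_right_injective₀ hn.ne')).2 (disjoint_image_add_image_gap _ _ _))
  rw [hrest, image_spread, ← image_union, image_add_union_image_gap _ (by omega),
    Nat.add_sub_cancel' (card_le_univ K |>.trans_eq (Fintype.card_fin n))] at hrepr
  exact ⟨_, hrepr, update_self ..⟩

theorem IsPattern.exists_isRepr_of_eq_univ [DecidableEq ι] (hP : IsPattern ℬ P) (hn : 0 < n)
    {i₀ i₁ : ι} (hi₀ : P i₀ = univ) (hi₁ : i₁ ≠ i₀) {t : ℕ} (ht : t ≤ n) :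
    ∃ f, IsRepr ℬ ((Icc 1 (n + n)).image (n * ·)) f ∧
      f i₀ = ((Icc 1 n).image (· + t)).image (n * ·) := by
  have hempty : P i₁ = ∅ := by
    simpa [onFun, hi₀, ← top_eq_univ, ← bot_eq_empty] using hP.disjoint hi₁
  have hσ := strictMono_spread (univ : Finset (Fin n)) (e := (· + t))
    fun _ _ h => by simpa using h
  have hτ := strictMono_spread (univ : Finset (Fin n)) (strictMono_gap t n)
  have hA : (univ : Finset (Fin n)).image (spread univ (gap t n)) ∈ ℬ := by
    simpa [hi₀] using (hP _ hτ).1 i₀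
  have hrepr := (hP _ hσ).update (i := i₁) hA (by
    rw [hempty, image_empty, sdiff_empty, image_spread, image_spread, card_univ, Fintype.card_fin]
    exact (disjoint_image (mul_right_injective₀ hn.ne')).2
      (disjoint_image_add_image_gap _ _ _).symm)
  rw [hempty, image_empty, sdiff_empty, image_spread, image_spread, card_univ, Fintype.card_fin,
    union_comm, ← image_union, image_add_union_image_gap _ ht] at hrepr
  refine ⟨_, hrepr, ?_⟩
  rw [update_of_ne hi₁.symm, hi₀, image_spread, card_univ, Fintype.card_fin]

theorem IsPattern.exists_two_mul_card_le (hP : IsPattern ℬ P) (hn : 0 < n)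
    (hne : ∀ i, P i ≠ univ) : ∃ i, 0 < #(P i) ∧ 2 * #(P i) ≤ n := by
  obtain ⟨i₀, h₀⟩ := hP.exists_mem ⟨0, hn⟩
  obtain ⟨k, hk⟩ := not_forall.1 (mt eq_univ_iff_forall.2 (hne i₀))
  obtain ⟨i₁, h₁⟩ := hP.exists_mem k
  have hi : i₀ ≠ i₁ := by rintro rfl; exact hk h₁
  have hsum : #(P i₀) + #(P i₁) ≤ n := by
    rw [← card_union_of_disjoint (hP.disjoint hi)]
    simpa using card_le_univ (P i₀ ∪ P i₁)
  rcases le_total #(P i₀) #(P i₁) with h | h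
  · exact ⟨i₀, card_pos.2 ⟨_, h₀⟩, by omega⟩
  · exact ⟨i₁, card_pos.2 ⟨_, h₁⟩, by omega⟩

theorem IsPattern.exists_lt_two_mul_ncard [DecidableEq ι] [Nontrivial ι] (hP : IsPattern ℬ P)
    (hn : 0 < n) : ∃ T : Finset ℕ, n < 2 * {f : ι → Finset ℕ | IsRepr ℬ T f}.ncard := by
  have hinj {p : ℕ} (hp : 0 < p) : Injective fun t => ((Icc 1 p).image (· + t)).image (n * ·) :=
    (image_injective (mul_right_injective₀ hn.ne')).comp (injective_image_Icc_add hp)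
  by_cases hconst : ∃ i₀, P i₀ = univ
  · obtain ⟨i₀, hi₀⟩ := hconst
    obtain ⟨i₁, hi₁⟩ := exists_ne i₀
    have := le_ncard_setOf_isRepr (I := range (n + 1)) (hinj hn).injOn i₀ fun t ht =>
      hP.exists_isRepr_of_eq_univ hn hi₀ hi₁ (Nat.lt_succ_iff.1 (mem_range.1 ht))
    rw [card_range] at this
    exact ⟨_, lt_of_lt_of_le (by omega) (Nat.mul_le_mul_left 2 this)⟩
  · push Not at hconst
    obtain ⟨i₀, hp, hpn⟩ := hP.exists_two_mul_card_le hn hconst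
    have := le_ncard_setOf_isRepr (I := range (n - #(P i₀) + 1)) (hinj hp).injOn i₀
      fun t ht => hP.exists_isRepr hn i₀ (Nat.lt_succ_iff.1 (mem_range.1 ht))
    rw [card_range] at this
    exact ⟨_, lt_of_lt_of_le (by omega) (Nat.mul_le_mul_left 2 this)⟩

end Pattern

theorem Set.Infinite.exists_infinite_subset_forall_card_eq {α : Type*} {X : Set α}
    (hX : X.Infinite) {n : ℕ} (hn : 0 < n) {p : Finset α → Prop}
    (hbad : {S : Finset α | ↑S ⊆ X ∧ #S = n ∧ ¬ p S}.Finite) :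
    ∃ Y ⊆ X, Y.Infinite ∧ ∀ S : Finset α, ↑S ⊆ Y → #S = n → p S := by
  refine ⟨X \ ⋃ S ∈ {S : Finset α | ↑S ⊆ X ∧ #S = n ∧ ¬ p S}, ↑S, Set.sdiff_subset,
    hX.sdiff (hbad.biUnion fun S _ => S.finite_toSet), fun S hSY hS => ?_⟩
  by_contra hpS
  obtain ⟨x, hx⟩ := card_pos.1 (hS ▸ hn)
  exact (hSY hx).2 (Set.mem_biUnion ⟨hSY.trans Set.sdiff_subset, hS, hpS⟩ hx)

theorem unbounded_of_partition_representations_general {α : Type*} [DecidableEq α]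
    (h : ℕ) (hh : 2 ≤ h) (X : Set α) (hX : X.Infinite)
    (𝒜 : Set (Finset α))
    (g : Finset α → ℕ)
    (hg : ∀ S : Finset α, g S =
      {f : Fin h → Finset α | (∀ i, f i ∈ 𝒜) ∧
        (∀ i j, i ≠ j → Disjoint (f i) (f j)) ∧
        Finset.univ.biUnion f = S}.ncard)
    (W : Set ℕ) (hW : W.Infinite)
    (hrep : ∀ n ∈ W, {S : Finset α | ↑S ⊆ X ∧ S.card = n ∧ ¬ (1 ≤ g S)}.Finite) :
    ∀ n : ℕ, ∃ S : Finset α, ↑S ⊆ X ∧ n ≤ g S := by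
  intro m
  have : Nontrivial (Fin h) := Fin.nontrivial_iff_two_le.2 hh
  obtain ⟨n, hnW, hmn⟩ := hW.exists_gt (2 * m)
  obtain ⟨Y, hYX, hY, hYrep⟩ :=
    hX.exists_infinite_subset_forall_card_eq (by omega) (hrep n hnW)
  let w : ℕ ↪ α := (Set.Infinite.natEmbedding Y hY).trans (Embedding.subtype _)
  have hwY (s : Finset ℕ) : ↑(s.map w) ⊆ Y := by
    intro x hx
    obtain ⟨k, -, rfl⟩ := mem_map.1 hx
    exact (Set.Infinite.natEmbedding Y hY k).2
  have hw (s : Finset ℕ) (hs : #s = n) :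
      ∃ f : Fin h → Finset ℕ, IsRepr {B | B.map w ∈ 𝒜} s f := by
    have hpos := hYrep _ (hwY s) (by rw [card_map, hs])
    rw [hg] at hpos
    obtain ⟨f, hf⟩ := Set.nonempty_of_ncard_ne_zero (Nat.one_le_iff_ne_zero.1 hpos)
    exact IsRepr.exists_comap w hf
  obtain ⟨e, P, hP⟩ := exists_isPattern n hw
  obtain ⟨T, hT⟩ := hP.exists_lt_two_mul_ncard (by omega)
  refine ⟨(T.map e.toEmbedding).map w, (hwY _).trans hYX, ?_⟩
  rw [hg]
  calc m ≤ {f : Fin h → Finset ℕ | IsRepr _ T f}.ncard := by omega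
    _ ≤ _ := ncard_setOf_isRepr_comap_le _ _
    _ ≤ _ := ncard_setOf_isRepr_comap_le _ _

/-- Nešetřil–Rödl-type theorem.  Let `h ≥ 2`, let `X` be a countably infinite set and
let `𝒜` be a set of finite subsets of `X`.  For a finite subset `S` of `X`, let `g S`
count the ordered `h`-tuples of pairwise disjoint members of `𝒜` with union `S`.
If there is an infinite set `W` of positive integers such that for every `n ∈ W` all but
finitely many `n`-element subsets of `X` satisfy `g S ≥ 1`, then `g` is unbounded. -/
theorem unbounded_of_partition_representations {α : Type*} [Countable α] [DecidableEq α]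
    (h : ℕ) (hh : 2 ≤ h) (X : Set α) (hX : X.Infinite)
    (𝒜 : Set (Finset α)) (h𝒜 : ∀ A ∈ 𝒜, ↑A ⊆ X)
    (g : Finset α → ℕ)
    (hg : ∀ S : Finset α, g S =
      {f : Fin h → Finset α | (∀ i, f i ∈ 𝒜) ∧
        (∀ i j, i ≠ j → Disjoint (f i) (f j)) ∧
        Finset.univ.biUnion f = S}.ncard)
    (W : Set ℕ) (hW : W.Infinite) (hWpos : ∀ n ∈ W, 0 < n)
    (hrep : ∀ n ∈ W, {S : Finset α | ↑S ⊆ X ∧ S.card = n ∧ ¬ (1 ≤ g S)}.Finite) :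
    ∀ n : ℕ, ∃ S : Finset α, ↑S ⊆ X ∧ n ≤ g S :=
  unbounded_of_partition_representations_general h hh X hX 𝒜 g hg W hW hrep
end

section
/- Let h ≥ 2, let X be a countably infinite set, and let (𝒜_1, ..., 𝒜_h) be an h-tuple of sets of finite subsets of X. For a finite subset S of X, let g(S) be the number of ordered h-tuples (A_1,...,A_h) ∈ 𝒜_1 × ... × 𝒜_h of pairwise disjoint sets with union S. Suppose there is an infinite set W of positive integers such that for every n ∈ W, all but finitely many n-element subsets S of X satisfy g(S) ≥ 2. Then for every integer n there exists a finite subset S of X with g(S) ≥ n. -/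
/-!
Fix `n ∈ W` above the target bound, discard the finitely many points lying in a bad `n`-set and
enumerate the rest of `X` as `E : ℕ ↪ α`. A representation of `{E (φ 0), …, E (φ (n-1))}`, `φ`
increasing, is encoded by a pattern `c : Fin n → Fin h` sending the `j`-th point to part `c j`.
Colour every `n`-subset of `ℕ` by two distinct patterns representing it; the infinite Ramsey
theorem gives a subsequence on which two fixed patterns `c ≠ c'` represent every `n`-subset.
If `c` is not constant, its fibres have sizes `k i` with `0 < k i₀ < n`. On an `n`-subset `S` of
the subsequence with gaps of length `n`, any `k i` points can be completed to `n` points in which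
they occupy exactly the positions `c⁻¹ i`, so every partition of `S` with part sizes `k` is a
representation: there are at least `n.choose (k i₀) ≥ n` of them. If `c` and `c'` are both
constant they are different constants, and their concatenation is a nonconstant pattern.
-/

open Finset

theorem Nat.self_le_choose {n k : ℕ} (hk : 0 < k) (hkn : k < n) : n ≤ n.choose k := by
  induction n generalizing k with
  | zero => omega
  | succ n ih =>
    obtain ⟨k, rfl⟩ := Nat.exists_eq_add_one_of_ne_zero hk.ne'
    rw [Nat.choose_succ_succ']
    rcases Nat.lt_or_ge (k + 1) n with hlt | hge
    · have : 0 < n.choose k := Nat.choose_pos (by omega)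
      have : n ≤ n.choose (k + 1) := ih k.succ_pos hlt
      omega
    · obtain rfl : n = k + 1 := by omega
      rw [Nat.choose_succ_self_right, Nat.choose_self]

theorem Nat.exists_infinite_subset_monochromatic {C : Type*} [Finite C] (n : ℕ)
    (f : Finset ℕ → C) {T : Set ℕ} (hT : T.Infinite) :
    ∃ T' ⊆ T, T'.Infinite ∧ ∃ c, ∀ K : Finset ℕ, ↑K ⊆ T' → #K = n → f K = c := by
  induction n generalizing f T with
  | zero => exact ⟨T, subset_rfl, hT, f ∅, fun K _ hK => by rw [Finset.card_eq_zero.mp hK]⟩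
  | succ n ih =>
    have head_step (A : Set ℕ) (hA : A.Infinite) : ∃ a ∈ A, ∃ B ⊆ A, B.Infinite ∧
        (∀ x ∈ B, a < x) ∧ ∃ c, ∀ K : Finset ℕ, ↑K ⊆ B → #K = n → f (insert a K) = c := by
      obtain ⟨a, ha⟩ := hA.nonempty
      have hA' : {x ∈ A | a < x}.Infinite :=
        (hA.sdiff (Set.finite_le_nat a)).mono fun x hx => ⟨hx.1, not_le.mp hx.2⟩
      obtain ⟨B, hBA, hB, c, hc⟩ := ih (fun K => f (insert a K)) hA'
      exact ⟨a, ha, B, fun x hx => (hBA hx).1, hB, fun x hx => (hBA hx).2, c, hc⟩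
    have : Nonempty C := ⟨f ∅⟩
    choose! head hhead tail htailA htail hlt col hcol using head_step
    set A : ℕ → Set ℕ := fun k => tail^[k] T
    have hA_succ (k : ℕ) : A (k + 1) = tail (A k) := Function.iterate_succ_apply' _ _ _
    have hAinf (k : ℕ) : (A k).Infinite := by
      induction k with
      | zero => exact hT
      | succ k ihk => rw [hA_succ]; exact htail _ ihk
    have hAanti : Antitone A :=
      antitone_nat_of_succ_le fun k => (hA_succ k).symm ▸ htailA _ (hAinf k)
    set a : ℕ → ℕ := fun k => head (A k)
    have ha_mem (k : ℕ) : a k ∈ A k := hhead _ (hAinf k)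
    have ha : StrictMono a := strictMono_nat_of_lt_succ fun k =>
      hlt _ (hAinf k) _ (hA_succ k ▸ ha_mem (k + 1))
    obtain ⟨c, hc⟩ := Finite.exists_infinite_fiber fun k => col (A k)
    refine ⟨a '' {k | col (A k) = c}, ?_,
      (Set.infinite_coe_iff.mp hc).image ha.injective.injOn, c, fun K hKT hK => ?_⟩
    · rintro _ ⟨k, -, rfl⟩
      exact hAanti (Nat.zero_le k) (ha_mem k)
    have hne : K.Nonempty := Finset.card_pos.mp (by omega)
    obtain ⟨k, hk, hkmin⟩ := hKT (K.min'_mem hne)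
    have hkK : a k ∈ K := hkmin ▸ K.min'_mem hne
    have hrest : ↑(K.erase (a k)) ⊆ tail (A k) := by
      intro y hy
      obtain ⟨hyne, hyK⟩ := mem_erase.mp hy
      obtain ⟨l, -, rfl⟩ := hKT hyK
      have hle : a k ≤ a l := by rw [hkmin]; exact K.min'_le _ hyK
      exact hA_succ k ▸ hAanti (ha.lt_iff_lt.mp (hle.lt_of_ne hyne.symm)) (ha_mem l)
    have hcard : #(K.erase (a k)) = n := by rw [card_erase_of_mem hkK, hK]; rfl
    rw [← insert_erase hkK, hcol _ (hAinf k) _ hrest hcard]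
    exact hk

theorem Nat.exists_orderEmbedding_monochromatic {C : Type*} [Finite C] (n : ℕ)
    (χ : (Fin n ↪o ℕ) → C) : ∃ t : ℕ ↪o ℕ, ∃ c, ∀ φ : Fin n ↪o ℕ, χ (φ.trans t) = c := by
  obtain ⟨T, -, hT, c, hc⟩ := exists_infinite_subset_monochromatic n
    (fun K => if hK : #K = n then χ (K.orderEmbOfFin hK) else χ default) Set.infinite_univ
  let t : ℕ ↪o ℕ := OrderEmbedding.ofStrictMono (Nat.nth (· ∈ T)) (Nat.nth_strictMono hT)
  refine ⟨t, c, fun φ => ?_⟩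
  set K := univ.map (φ.trans t).toEmbedding
  have hK : #K = n := by simp [K]
  have hKT : ↑K ⊆ T := by
    intro x hx
    obtain ⟨j, -, rfl⟩ := mem_map.mp hx
    exact Nat.nth_mem_of_infinite hT _
  have := hc K hKT hK
  rwa [dif_pos hK, ← orderEmbOfFin_unique' hK fun j => mem_map_of_mem _ (mem_univ j)] at this

theorem exists_orderEmbedding_comp_eq {k m : ℕ} {u : Fin k → Fin m} (hu : StrictMono u)
    {v : Fin k → ℕ} (hle : ∀ r, (u r : ℕ) ≤ v r)
    (hgap : ∀ r r', r' < r → v r' + u r ≤ v r + u r') :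
    ∃ φ : Fin m ↪o ℕ, φ ∘ u = v := by
  set shift : Fin m → ℕ := fun j => (univ.filter (u · ≤ j)).sup fun r => v r - u r
  have hshift : Monotone shift := fun j j' hjj' =>
    sup_mono fun r hr => mem_filter.mpr ⟨mem_univ r, (mem_filter.mp hr).2.trans hjj'⟩
  have hφ : StrictMono fun j : Fin m => (j : ℕ) + shift j := fun j j' hjj' => by
    have := hshift hjj'.le
    simp only [Fin.lt_def] at hjj'
    show (j : ℕ) + shift j < j' + shift j'
    omega
  refine ⟨OrderEmbedding.ofStrictMono _ hφ, funext fun r => ?_⟩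
  have hshift_u : shift (u r) = v r - u r := by
    refine le_antisymm (Finset.sup_le fun r' hr' => ?_)
      (le_sup (f := fun r' => v r' - u r') (mem_filter.mpr ⟨mem_univ r, le_rfl⟩))
    rcases (hu.le_iff_le.mp (mem_filter.mp hr').2).lt_or_eq with hlt | rfl
    · have := hgap r r' hlt
      omega
    · rfl
  simp only [Function.comp_apply, OrderEmbedding.coe_ofStrictMono, hshift_u]
  have := hle r
  omega

theorem Set.Infinite.exists_natEmbedding_forall_card_eq {α : Type*} {X : Set α}
    (hX : X.Infinite) {n : ℕ} (hn : 0 < n) {p : Finset α → Prop}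
    (hp : {S : Finset α | ↑S ⊆ X ∧ #S = n ∧ ¬ p S}.Finite) :
    ∃ E : ℕ ↪ α, Set.range E ⊆ X ∧ ∀ S : Finset α, ↑S ⊆ Set.range E → #S = n → p S := by
  set Y := ⋃ S ∈ {S : Finset α | ↑S ⊆ X ∧ #S = n ∧ ¬ p S}, (↑S : Set α)
  have hY : Y.Finite := hp.biUnion fun S _ => S.finite_toSet
  set E : ℕ ↪ α := (hX.sdiff hY).natEmbedding.trans (Function.Embedding.subtype _)
  have hE : Set.range E ⊆ X \ Y :=
    Set.range_subset_iff.mpr fun k => ((hX.sdiff hY).natEmbedding _ k).2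
  refine ⟨E, hE.trans Set.sdiff_subset, fun S hS hSn => ?_⟩
  by_contra hpS
  have hSY : ↑S ⊆ Y := Set.subset_biUnion_of_mem (u := fun S : Finset α => (↑S : Set α))
    ⟨hS.trans (hE.trans Set.sdiff_subset), hSn, hpS⟩
  obtain ⟨x, hx⟩ : S.Nonempty := card_pos.mp (by omega)
  exact (hE (hS hx)).2 (hSY hx)

section Representations

variable {α ι : Type*} [DecidableEq α]

section Partition

variable [DecidableEq ι]

theorem Finset.pairwiseDisjoint_update_insert_of_biUnion_eq_sdiff {s : Finset ι} {a : ι}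
    (ha : a ∉ s) {P S : Finset α} (hPS : P ⊆ S) {f : ι → Finset α}
    (hf : (s : Set ι).PairwiseDisjoint f) (hfS : s.biUnion f = S \ P) :
    (↑(insert a s) : Set ι).PairwiseDisjoint (Function.update f a P) ∧
      (insert a s).biUnion (Function.update f a P) = S := by
  have heq : ∀ i ∈ s, Function.update f a P i = f i := fun i hi =>
    Function.update_of_ne (ne_of_mem_of_not_mem hi ha) _ _
  have hsub : ∀ i ∈ s, f i ⊆ S \ P := fun i hi => hfS ▸ subset_biUnion_of_mem f hi
  constructor
  · rw [coe_insert]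
    refine Set.PairwiseDisjoint.insert (fun i hi j hj hij => ?_) fun j hj _ => ?_
    · rw [Function.onFun, heq i hi, heq j hj]
      exact hf hi hj hij
    · rw [Function.update_self, heq j hj]
      exact disjoint_of_subset_right (hsub j hj) disjoint_sdiff
  · rw [biUnion_insert, Function.update_self, biUnion_congr rfl heq, hfS,
      union_sdiff_of_subset hPS]

theorem Finset.exists_pairwiseDisjoint_card_eq (s : Finset ι) (k : ι → ℕ) (S : Finset α)
    (hk : ∑ i ∈ s, k i = #S) :
    ∃ f : ι → Finset α, (∀ i ∈ s, #(f i) = k i) ∧ (s : Set ι).PairwiseDisjoint f ∧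
      s.biUnion f = S := by
  induction s using Finset.induction_on generalizing S with
  | empty => exact ⟨fun _ => ∅, by simp, by simp, by simpa [eq_comm] using hk⟩
  | insert a s ha ih =>
    rw [sum_insert ha] at hk
    obtain ⟨P, hPS, hP⟩ := exists_subset_card_eq (show k a ≤ #S by omega)
    obtain ⟨f, hfk, hf, hfS⟩ := ih (S \ P) (by rw [card_sdiff_of_subset hPS]; omega)
    obtain ⟨hdisj, hunion⟩ := pairwiseDisjoint_update_insert_of_biUnion_eq_sdiff ha hPS hf hfS
    refine ⟨Function.update f a P, fun i hi => ?_, hdisj, hunion⟩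
    rcases mem_insert.mp hi with rfl | hi
    · rw [Function.update_self, hP]
    · rw [Function.update_of_ne (ne_of_mem_of_not_mem hi ha), hfk i hi]

end Partition

def representations [Fintype ι] (𝒜 : ι → Set (Finset α)) (S : Finset α) :
    Set (ι → Finset α) :=
  {f | (∀ i, f i ∈ 𝒜 i) ∧ (∀ i j, i ≠ j → Disjoint (f i) (f j)) ∧ univ.biUnion f = S}

theorem representations_finite [Fintype ι] (𝒜 : ι → Set (Finset α)) (S : Finset α) :
    (representations 𝒜 S).Finite :=
  (Set.Finite.pi fun _ => S.powerset.finite_toSet).subset fun f ⟨_, _, hfS⟩ i _ =>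
    mem_powerset.mpr (hfS ▸ subset_biUnion_of_mem f (mem_univ i))

section Counting

variable [Fintype ι] [DecidableEq ι] {𝒜 : ι → Set (Finset α)} {S : Finset α} {k : ι → ℕ}

theorem exists_mem_representations_apply_eq (hk : ∑ i, k i = #S)
    (h𝒜 : ∀ i, ∀ P ⊆ S, #P = k i → P ∈ 𝒜 i) {i₀ : ι} {P : Finset α} (hPS : P ⊆ S)
    (hP : #P = k i₀) : ∃ f ∈ representations 𝒜 S, f i₀ = P := by
  obtain ⟨f, hfk, hf, hfS⟩ := exists_pairwiseDisjoint_card_eq (univ.erase i₀) k (S \ P) (by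
    rw [card_sdiff_of_subset hPS, ← add_sum_erase _ _ (mem_univ i₀)] at *
    omega)
  obtain ⟨hdisj, hunion⟩ :=
    pairwiseDisjoint_update_insert_of_biUnion_eq_sdiff (notMem_erase i₀ univ) hPS hf hfS
  rw [insert_erase (mem_univ i₀)] at hdisj hunion
  have hcard (i : ι) : #(Function.update f i₀ P i) = k i := by
    rcases eq_or_ne i i₀ with rfl | hi
    · rw [Function.update_self, hP]
    · rw [Function.update_of_ne hi, hfk i (mem_erase.mpr ⟨hi, mem_univ i⟩)]
  refine ⟨Function.update f i₀ P, ⟨fun i => ?_, fun i j hij => ?_, hunion⟩, Function.update_self ..⟩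
  · exact h𝒜 i _ (hunion ▸ subset_biUnion_of_mem _ (mem_univ i)) (hcard i)
  · exact hdisj (mem_coe.mpr (mem_univ i)) (mem_coe.mpr (mem_univ j)) hij

theorem choose_le_ncard_representations (hk : ∑ i, k i = #S)
    (h𝒜 : ∀ i, ∀ P ⊆ S, #P = k i → P ∈ 𝒜 i) (i₀ : ι) :
    (#S).choose (k i₀) ≤ (representations 𝒜 S).ncard := by
  have hsub : ↑(S.powersetCard (k i₀)) ⊆ (fun f => f i₀) '' representations 𝒜 S := fun P hP =>
    exists_mem_representations_apply_eq hk h𝒜 (mem_powersetCard.mp hP).1 (mem_powersetCard.mp hP).2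
  calc (#S).choose (k i₀) = (↑(S.powersetCard (k i₀)) : Set (Finset α)).ncard := by
        rw [Set.ncard_coe_finset, card_powersetCard]
    _ ≤ ((fun f => f i₀) '' representations 𝒜 S).ncard :=
        Set.ncard_le_ncard hsub ((representations_finite 𝒜 S).image _)
    _ ≤ (representations 𝒜 S).ncard := Set.ncard_image_le (representations_finite 𝒜 S)

end Counting

section Pattern

variable [DecidableEq ι]

theorem exists_eq_image_fiber [Fintype ι] {β : Type*} [Fintype β] (e : β → α)
    {f : ι → Finset α} (hdisj : ∀ i j, i ≠ j → Disjoint (f i) (f j))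
    (hunion : univ.biUnion f = univ.image e) :
    ∃ c : β → ι, f = fun i => (univ.filter (c · = i)).image e := by
  have hcover (b : β) : ∃ i, e b ∈ f i := by
    simpa [← hunion] using mem_image_of_mem e (mem_univ b)
  choose c hc using hcover
  refine ⟨c, funext fun i => ext fun x => ⟨fun hx => ?_, ?_⟩⟩
  · obtain ⟨b, -, rfl⟩ := mem_image.mp (hunion ▸ mem_biUnion.mpr ⟨i, mem_univ i, hx⟩)
    have hbi : c b = i := by
      by_contra hne
      exact disjoint_left.mp (hdisj _ _ hne) (hc b) hx
    exact mem_image_of_mem e (mem_filter.mpr ⟨mem_univ b, hbi⟩)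
  · simp only [mem_image, mem_filter, mem_univ, true_and]
    rintro ⟨b, rfl, rfl⟩
    exact hc b

variable (𝒜 : ι → Set (Finset α)) (F : ℕ → α)

def PatternRepresents {n : ℕ} (c : Fin n → ι) : Prop :=
  ∀ φ : Fin n ↪o ℕ, ∀ i, (univ.filter (c · = i)).image (F ∘ φ) ∈ 𝒜 i

variable {𝒜 F}

theorem image_filter_append_eq_left {m n : ℕ} {c : Fin m → ι} {c' : Fin n → ι} {i : ι}
    (hi : ∀ j, c' j ≠ i) (e : Fin (m + n) → α) :
    (univ.filter (Fin.append c c' · = i)).image e =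
      (univ.filter (c · = i)).image (e ∘ Fin.castAdd n) := by
  ext x
  simp only [mem_image, mem_filter, mem_univ, true_and, Function.comp_apply]
  refine ⟨fun ⟨j, hj, hx⟩ => ?_, fun ⟨j, hj, hx⟩ => ⟨Fin.castAdd n j, by simpa using hj, hx⟩⟩
  induction j using Fin.addCases with
  | left j => exact ⟨j, by simpa using hj, hx⟩
  | right j => exact absurd (by simpa using hj) (hi j)

theorem image_filter_append_eq_right {m n : ℕ} {c : Fin m → ι} {c' : Fin n → ι} {i : ι}
    (hi : ∀ j, c j ≠ i) (e : Fin (m + n) → α) :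
    (univ.filter (Fin.append c c' · = i)).image e =
      (univ.filter (c' · = i)).image (e ∘ Fin.natAdd m) := by
  ext x
  simp only [mem_image, mem_filter, mem_univ, true_and, Function.comp_apply]
  refine ⟨fun ⟨j, hj, hx⟩ => ?_, fun ⟨j, hj, hx⟩ => ⟨Fin.natAdd m j, by simpa using hj, hx⟩⟩
  induction j using Fin.addCases with
  | left j => exact absurd (by simpa using hj) (hi j)
  | right j => exact ⟨j, by simpa using hj, hx⟩

theorem PatternRepresents.append {m n : ℕ} {c : Fin m → ι} {c' : Fin n → ι}
    (hc : PatternRepresents 𝒜 F c) (hc' : PatternRepresents 𝒜 F c')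
    (hdisj : ∀ j j', c j ≠ c' j') : PatternRepresents 𝒜 F (Fin.append c c') := by
  intro φ i
  by_cases hi : ∃ j, c j = i
  · obtain ⟨j, rfl⟩ := hi
    rw [image_filter_append_eq_left (hdisj j · |>.symm)]
    exact hc ((Fin.castAddOrderEmb n).trans φ) _
  · push Not at hi
    rw [image_filter_append_eq_right hi]
    exact hc' ((Fin.natAddOrderEmb m).trans φ) _

/-- The gaps of `σ` leave room to place the other points of a pattern around any of its parts. -/
theorem PatternRepresents.mem_of_subset {m : ℕ} {c : Fin m → ι} (hF : F.Injective)
    (hc : PatternRepresents 𝒜 F c) {σ : Fin m → ℕ} (hσ₀ : ∀ s, m ≤ σ s)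
    (hσ : ∀ s s', s < s' → σ s + m ≤ σ s') (i : ι) {P : Finset α}
    (hP : P ⊆ univ.image (F ∘ σ)) (hPcard : #P = #(univ.filter (c · = i))) : P ∈ 𝒜 i := by
  obtain ⟨Q, -, rfl⟩ := subset_image_iff.mp hP
  set J := univ.filter (c · = i)
  have hσinj : σ.Injective := StrictMono.injective fun s s' h => by have := hσ s s' h; omega
  have hQ : #Q = #J := by rwa [card_image_of_injective _ (hF.comp hσinj)] at hPcard
  set u := J.orderEmbOfFin rfl
  set q := Q.orderEmbOfFin hQ
  have hgap (r r' : Fin #J) (hr : r' < r) : σ (q r') + u r ≤ σ (q r) + u r' := by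
    have := hσ _ _ (q.strictMono hr)
    have := (u r).isLt
    omega
  obtain ⟨φ, hφ⟩ := exists_orderEmbedding_comp_eq u.strictMono (v := σ ∘ q)
    (fun r => ((u r).isLt.trans_le (hσ₀ _)).le) hgap
  convert hc φ i using 1
  calc Q.image (F ∘ σ) = (univ.image q).image (F ∘ σ) := by rw [image_orderEmbOfFin_univ]
    _ = univ.image ((F ∘ φ) ∘ u) := by rw [image_image, Function.comp_assoc F φ, hφ]; rfl
    _ = J.image (F ∘ φ) := by rw [← image_image, image_orderEmbOfFin_univ]

theorem PatternRepresents.exists_le_ncard [Fintype ι] {m : ℕ} {c : Fin m → ι}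
    (hF : F.Injective) (hc : PatternRepresents 𝒜 F c) {j₀ j₁ : Fin m} (hj : c j₀ ≠ c j₁) :
    ∃ S : Finset α, ↑S ⊆ Set.range F ∧ m ≤ (representations 𝒜 S).ncard := by
  set σ : Fin m → ℕ := fun s => m * (s + 1)
  have hσ₀ (s : Fin m) : m ≤ σ s := Nat.le_mul_of_pos_right m s.succ_pos
  have hσ (s s' : Fin m) (h : s < s') : σ s + m ≤ σ s' := by
    simp only [σ]
    nlinarith [Fin.lt_def.mp h]
  set S := univ.image (F ∘ σ)
  have hS : #S = m := by
    rw [card_image_of_injective _ (hF.comp (StrictMono.injective fun s s' h => by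
      have := hσ s s' h; have := j₀.pos; omega)), card_univ, Fintype.card_fin]
  set k : ι → ℕ := fun i => #(univ.filter (c · = i))
  have hk : ∑ i, k i = #S := by
    rw [hS, ← card_eq_sum_card_fiberwise (fun _ _ => mem_univ _), card_univ, Fintype.card_fin]
  have hk₀ : 0 < k (c j₀) := card_pos.mpr ⟨j₀, by simp⟩
  have hk₁ : k (c j₀) < m := by
    calc k (c j₀) < #(univ : Finset (Fin m)) :=
          card_lt_card (filter_ssubset.mpr ⟨j₁, mem_univ _, hj.symm⟩)
      _ = m := by rw [card_univ, Fintype.card_fin]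
  refine ⟨S, by rw [coe_image, coe_univ, Set.image_univ]; exact Set.range_comp_subset_range σ F, ?_⟩
  calc m ≤ m.choose (k (c j₀)) := Nat.self_le_choose hk₀ hk₁
    _ = (#S).choose (k (c j₀)) := by rw [hS]
    _ ≤ (representations 𝒜 S).ncard := choose_le_ncard_representations hk
        (fun i _ hP hPcard => hc.mem_of_subset hF hσ₀ hσ i hP hPcard) _

theorem exists_le_ncard_of_ne [Fintype ι] {n : ℕ} {c c' : Fin n → ι} (hF : F.Injective)
    (hc : PatternRepresents 𝒜 F c) (hc' : PatternRepresents 𝒜 F c') (hne : c ≠ c') :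
    ∃ S : Finset α, ↑S ⊆ Set.range F ∧ n ≤ (representations 𝒜 S).ncard := by
  by_cases hcc : ∃ j j', c j ≠ c j'
  · obtain ⟨j, j', hj⟩ := hcc
    exact hc.exists_le_ncard hF hj
  by_cases hcc' : ∃ j j', c' j ≠ c' j'
  · obtain ⟨j, j', hj⟩ := hcc'
    exact hc'.exists_le_ncard hF hj
  push Not at hcc hcc'
  have hdisj : ∀ j j', c j ≠ c' j' := fun j j' h =>
    hne (funext fun l => by rw [hcc l j, h, hcc' j' l])
  obtain ⟨j⟩ : Nonempty (Fin n) := by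
    rcases n with _ | n
    · exact absurd (Subsingleton.elim _ _) hne
    · exact ⟨0⟩
  have hj : Fin.append c c' (Fin.castAdd n j) ≠ Fin.append c c' (Fin.natAdd n j) := by
    rw [Fin.append_left, Fin.append_right]
    exact hdisj j j
  obtain ⟨S, hSF, hS⟩ := (hc.append hc' hdisj).exists_le_ncard hF hj
  exact ⟨S, hSF, by omega⟩

end Pattern

theorem exists_patternRepresents_pair [Fintype ι] [DecidableEq ι] {𝒜 : ι → Set (Finset α)}
    {n : ℕ} (E : ℕ → α)
    (hE : ∀ φ : Fin n ↪o ℕ, 1 < (representations 𝒜 (univ.image (E ∘ φ))).ncard) :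
    ∃ t : ℕ ↪o ℕ, ∃ c c' : Fin n → ι, c ≠ c' ∧
      PatternRepresents 𝒜 (E ∘ t) c ∧ PatternRepresents 𝒜 (E ∘ t) c' := by
  have hpair (φ : Fin n ↪o ℕ) : ∃ p : (Fin n → ι) × (Fin n → ι), p.1 ≠ p.2 ∧
      ∀ i, (univ.filter (p.1 · = i)).image (E ∘ φ) ∈ 𝒜 i ∧
        (univ.filter (p.2 · = i)).image (E ∘ φ) ∈ 𝒜 i := by
    obtain ⟨f, f', hf, hf', hne⟩ :=
      (Set.one_lt_ncard_iff (representations_finite 𝒜 _)).mp (hE φ)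
    obtain ⟨c, rfl⟩ := exists_eq_image_fiber (E ∘ φ) hf.2.1 hf.2.2
    obtain ⟨c', rfl⟩ := exists_eq_image_fiber (E ∘ φ) hf'.2.1 hf'.2.2
    exact ⟨(c, c'), fun h : c = c' => hne (by rw [h]), fun i => ⟨hf.1 i, hf'.1 i⟩⟩
  choose p hp using hpair
  obtain ⟨t, ⟨c, c'⟩, hc⟩ := Nat.exists_orderEmbedding_monochromatic n p
  refine ⟨t, c, c', ?_, fun φ i => ?_, fun φ i => ?_⟩
  · have := (hp ((default : Fin n ↪o ℕ).trans t)).1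
    rwa [hc] at this
  · have := ((hp (φ.trans t)).2 i).1
    rwa [hc] at this
  · have := ((hp (φ.trans t)).2 i).2
    rwa [hc] at this

end Representations

theorem unbounded_of_two_partition_representations_general {α : Type*} [DecidableEq α]
    (h : ℕ) (X : Set α) (hX : X.Infinite)
    (𝒜 : Fin h → Set (Finset α))
    (g : Finset α → ℕ)
    (hg : ∀ S : Finset α, g S =
      {f : Fin h → Finset α | (∀ i, f i ∈ 𝒜 i) ∧
        (∀ i j, i ≠ j → Disjoint (f i) (f j)) ∧
        Finset.univ.biUnion f = S}.ncard)
    (W : Set ℕ) (hW : W.Infinite)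
    (hrep : ∀ n ∈ W, {S : Finset α | ↑S ⊆ X ∧ S.card = n ∧ ¬ (2 ≤ g S)}.Finite) :
    ∀ n : ℕ, ∃ S : Finset α, ↑S ⊆ X ∧ n ≤ g S := by
  intro N
  obtain ⟨n, hnW, hNn⟩ := hW.exists_gt N
  obtain ⟨E, hEX, hE⟩ := hX.exists_natEmbedding_forall_card_eq (by omega) (hrep n hnW)
  have hE' (φ : Fin n ↪o ℕ) : 1 < (representations 𝒜 (univ.image (E ∘ φ))).ncard := by
    have hφ := hE (univ.image (E ∘ φ))
      (by rw [coe_image, coe_univ, Set.image_univ]; exact Set.range_comp_subset_range φ E)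
      (by rw [card_image_of_injective _ (E.injective.comp φ.injective), card_univ,
        Fintype.card_fin])
    rwa [hg] at hφ
  obtain ⟨t, c, c', hne, hc, hc'⟩ := exists_patternRepresents_pair E hE'
  obtain ⟨S, hSF, hnS⟩ := exists_le_ncard_of_ne (E.injective.comp t.injective) hc hc' hne
  refine ⟨S, hSF.trans ((Set.range_comp_subset_range t E).trans hEX), ?_⟩
  rw [hg]
  exact hNn.le.trans hnS

/-- Key theorem for multiplicative systems.  Let `h ≥ 2`, let `X` be a countably
infinite set and let `(𝒜 1, …, 𝒜 h)` be an `h`-tuple of sets of finite subsets of `X`.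
For a finite subset `S` of `X`, let `g S` count the ordered `h`-tuples
`(A 1, …, A h) ∈ 𝒜 1 × ⋯ × 𝒜 h` of pairwise disjoint sets with union `S`.
If there is an infinite set `W` of positive integers such that for every `n ∈ W` all but
finitely many `n`-element subsets of `X` satisfy `g S ≥ 2`, then `g` is unbounded. -/
theorem unbounded_of_two_partition_representations {α : Type*} [Countable α] [DecidableEq α]
    (h : ℕ) (hh : 2 ≤ h) (X : Set α) (hX : X.Infinite)
    (𝒜 : Fin h → Set (Finset α)) (h𝒜 : ∀ i, ∀ A ∈ 𝒜 i, ↑A ⊆ X)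
    (g : Finset α → ℕ)
    (hg : ∀ S : Finset α, g S =
      {f : Fin h → Finset α | (∀ i, f i ∈ 𝒜 i) ∧
        (∀ i j, i ≠ j → Disjoint (f i) (f j)) ∧
        Finset.univ.biUnion f = S}.ncard)
    (W : Set ℕ) (hW : W.Infinite) (hWpos : ∀ n ∈ W, 0 < n)
    (hrep : ∀ n ∈ W, {S : Finset α | ↑S ⊆ X ∧ S.card = n ∧ ¬ (2 ≤ g S)}.Finite) :
    ∀ n : ℕ, ∃ S : Finset α, ↑S ⊆ X ∧ n ≤ g S :=
  unbounded_of_two_partition_representations_general h X hX 𝒜 g hg W hW hrep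
end

section
/- Let h ≥ 2 and let B be a set of positive integers such that every sufficiently large positive integer n is a product b_1 ⋯ b_h with all b_i ∈ B. Then the function g_{B,h}(n) counting ordered representations n = b_1 ⋯ b_h with b_i ∈ B is unbounded: for every m there exists n with g_{B,h}(n) ≥ m. -/
/-!
Colour each finite set of primes by whether its product lies in `B`. By Ramsey's theorem there
is an infinite set `T` of primes `≥ N` on which, for every size `k ≤ h m`, this colour depends
only on `k`. The product of `h m` primes of `T` has a representation, and since it is squarefree
one of its factors is the product of some `M ≥ m` of these primes; so every product of `M` primes
of `T` lies in `B`. Now split `h M` primes of `T` into `h` blocks of `M`: exchanging the `j`-th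
prime of one block with the first prime of another gives, for `j < M`, `M` distinct
representations of the same number.
-/

open Finset Function

theorem infinite_ramsey {α : Type*} [Finite α] (f : Finset ℕ → α) (k : ℕ) {S : Set ℕ}
    (hS : S.Infinite) :
    ∃ T ⊆ S, T.Infinite ∧ ∃ c, ∀ Y : Finset ℕ, ↑Y ⊆ T → #Y = k → f Y = c := by
  induction k generalizing f S with
  | zero => exact ⟨S, subset_rfl, hS, f ∅, fun Y _ hY => by rw [Finset.card_eq_zero.mp hY]⟩
  | succ k ih =>
    have step : ∀ S : {S : Set ℕ // S.Infinite}, ∃ (S' : {S : Set ℕ // S.Infinite}) (c : α),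
        S'.1 ⊆ S.1 \ Set.Iic (sInf S.1) ∧
          ∀ Y : Finset ℕ, ↑Y ⊆ S'.1 → #Y = k → f (insert (sInf S.1) Y) = c := by
      rintro ⟨S, hS⟩
      obtain ⟨S', hS'S, hS', c, hc⟩ :=
        ih (fun Y => f (insert (sInf S) Y)) (hS.sdiff (Set.finite_Iic _))
      exact ⟨⟨S', hS'⟩, c, hS'S, hc⟩
    choose next col next_subset col_spec using step
    -- A decreasing chain of infinite sets with increasing least elements `a n`: the colour of a
    -- `(k + 1)`-subset of the chain with least element `a n` is `col (seq n)`.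
    set seq : ℕ → {S : Set ℕ // S.Infinite} := fun n => next^[n] ⟨S, hS⟩
    have seq_succ (n : ℕ) : seq (n + 1) = next (seq n) := iterate_succ_apply' ..
    set a : ℕ → ℕ := fun n => sInf (seq n).1
    have a_mem (n : ℕ) : a n ∈ (seq n).1 := Nat.sInf_mem (seq n).2.nonempty
    have seq_antitone : Antitone fun n => (seq n).1 := antitone_nat_of_succ_le fun n => by
      rw [seq_succ]; exact (next_subset _).trans Set.sdiff_subset
    have mem_next {n n' : ℕ} (hnn' : n < n') {x : ℕ} (hx : x ∈ (seq n').1) :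
        x ∈ (next (seq n)).1 := seq_succ n ▸ seq_antitone hnn' hx
    have a_strictMono : StrictMono a := fun n n' hnn' => by
      simpa using (next_subset _ (mem_next hnn' (a_mem n'))).2
    obtain ⟨c, hc⟩ := Finite.exists_infinite_fiber fun n => col (seq n)
    have hI : {n | col (seq n) = c}.Infinite := Set.infinite_coe_iff.mp hc
    refine ⟨a '' {n | col (seq n) = c}, ?_, hI.image a_strictMono.injective.injOn, c, ?_⟩
    · rintro _ ⟨n, -, rfl⟩
      exact seq_antitone (Nat.zero_le n) (a_mem n)
    · intro Y hYT hYk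
      have hY : Y.Nonempty := card_pos.mp (by omega)
      obtain ⟨n, hn, hmin⟩ := hYT (Y.min'_mem hY)
      have ha : a n ∈ Y := hmin ▸ Y.min'_mem hY
      have rest_subset : ↑(Y.erase (a n)) ⊆ (next (seq n)).1 := by
        intro x hx
        obtain ⟨hxn, hxY⟩ := mem_erase.mp hx
        obtain ⟨n', -, rfl⟩ := hYT hxY
        have hlt : a n < a n' := lt_of_le_of_ne (hmin ▸ Y.min'_le _ hxY) (Ne.symm hxn)
        exact mem_next (a_strictMono.lt_iff_lt.mp hlt) (a_mem n')
      rw [← insert_erase ha, ← hn]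
      exact col_spec (seq n) _ rest_subset (by rw [card_erase_of_mem ha]; omega)

theorem infinite_ramsey_forall_le {α : Type*} [Finite α] (f : Finset ℕ → α) (K : ℕ) {S : Set ℕ}
    (hS : S.Infinite) :
    ∃ T ⊆ S, T.Infinite ∧ ∀ k ≤ K, ∃ c, ∀ Y : Finset ℕ, ↑Y ⊆ T → #Y = k → f Y = c := by
  induction K with
  | zero =>
    obtain ⟨T, hTS, hT, c, hc⟩ := infinite_ramsey f 0 hS
    exact ⟨T, hTS, hT, fun k hk => ⟨c, fun Y hYT hYk => hc Y hYT (by omega)⟩⟩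
  | succ K ih =>
    obtain ⟨T, hTS, hT, hTc⟩ := ih
    obtain ⟨T', hT'T, hT', c, hc⟩ := infinite_ramsey f (K + 1) hT
    refine ⟨T', hT'T.trans hTS, hT', fun k hk => ?_⟩
    rcases hk.lt_or_eq with hk | rfl
    · obtain ⟨c', hc'⟩ := hTc k (by omega)
      exact ⟨c', fun Y hYT' => hc' Y (hYT'.trans hT'T)⟩
    · exact ⟨c, hc⟩

def productReps (B : Set ℕ) (ι : Type*) [Fintype ι] (n : ℕ) : Set (ι → ℕ) :=
  {b | (∀ i, b i ∈ B) ∧ ∏ i, b i = n}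

theorem productReps_finite (B : Set ℕ) (ι : Type*) [Fintype ι] {n : ℕ} (hn : n ≠ 0) :
    (productReps B ι n).Finite := by
  refine (Set.Finite.pi' fun _ => n.divisors.finite_toSet).subset fun b hb i => ?_
  rw [← hb.2, mem_coe, Nat.mem_divisors]
  exact ⟨dvd_prod_of_mem b (mem_univ i), hb.2.symm ▸ hn⟩

theorem squarefree_prod_primes {Y : Finset ℕ} (hY : ∀ p ∈ Y, p.Prime) :
    Squarefree (∏ p ∈ Y, p) :=
  squarefree_prod_of_pairwise_isCoprime
    (fun p hp q hq hpq => Nat.coprime_iff_isRelPrime.mp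
      ((Nat.coprime_primes (hY p hp) (hY q hq)).mpr hpq))
    fun p hp => (hY p hp).squarefree

theorem exists_factor_eq_prod_primes {ι : Type*} [Fintype ι] [Nonempty ι] {Y : Finset ℕ}
    (hY : ∀ p ∈ Y, p.Prime) {b : ι → ℕ} (hb : ∏ i, b i = ∏ p ∈ Y, p) :
    ∃ i, ∃ Z ⊆ Y, #Y ≤ Fintype.card ι * #Z ∧ b i = ∏ p ∈ Z, p := by
  have hsq := squarefree_prod_primes hY
  have hbi (i : ι) : b i ∣ ∏ p ∈ Y, p := hb ▸ dvd_prod_of_mem b (mem_univ i)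
  have factors_subset (i : ι) : (b i).primeFactors ⊆ Y :=
    Nat.primeFactors_prod hY ▸ Nat.primeFactors_mono (hbi i) hsq.ne_zero
  have cover : Y ⊆ univ.biUnion fun i => (b i).primeFactors := by
    intro p hp
    have hpb : p ∣ ∏ i, b i := hb ▸ dvd_prod_of_mem _ hp
    obtain ⟨i, -, hpi⟩ := ((hY p hp).prime.dvd_finsetProd_iff b).mp hpb
    exact mem_biUnion.mpr ⟨i, mem_univ i, Nat.mem_primeFactors.mpr
      ⟨hY p hp, hpi, ne_zero_of_dvd_ne_zero hsq.ne_zero (hbi i)⟩⟩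
  have hsum : ∑ _i : ι, #Y ≤ ∑ i, Fintype.card ι * #(b i).primeFactors := by
    rw [sum_const, card_univ, smul_eq_mul, ← mul_sum]
    exact Nat.mul_le_mul_left _ ((card_le_card cover).trans card_biUnion_le)
  obtain ⟨i, -, hi⟩ := exists_le_of_sum_le univ_nonempty hsum
  exact ⟨i, _, factors_subset i, hi,
    (Nat.prod_primeFactors_of_squarefree (hsq.squarefree_of_dvd (hbi i))).symm⟩

theorem exists_infinite_primes_forall_card_eq_prod_mem {ι : Type*} [Fintype ι] [Nonempty ι]
    {B : Set ℕ} {N : ℕ} (hbasis : ∀ n, N ≤ n → (productReps B ι n).Nonempty) {m : ℕ}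
    (hm : 0 < m) :
    ∃ M, m ≤ M ∧ ∃ T : Set ℕ, T.Infinite ∧ (∀ p ∈ T, p.Prime) ∧
      ∀ Y : Finset ℕ, ↑Y ⊆ T → #Y = M → ∏ p ∈ Y, p ∈ B := by
  set k := Fintype.card ι * m
  have hk : 0 < k := Nat.mul_pos Fintype.card_pos hm
  obtain ⟨T, hTP, hT, hTc⟩ := infinite_ramsey_forall_le (fun Y => ∏ p ∈ Y, p ∈ B) k
    (Nat.infinite_setOfPred_prime.sdiff (Set.finite_Iio N))
  have hTprime (p : ℕ) (hp : p ∈ T) : p.Prime := (hTP hp).1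
  obtain ⟨Y, hYT, hYk⟩ := hT.exists_subset_card_eq k
  have hYprime (p : ℕ) (hp : p ∈ Y) : p.Prime := hTprime p (hYT hp)
  have hNY : N ≤ ∏ p ∈ Y, p := by
    obtain ⟨p, hp⟩ := card_pos.mp (hYk ▸ hk)
    exact (not_lt.mp (hTP (hYT hp)).2).trans
      (Nat.le_of_dvd (prod_pos fun q hq => (hYprime q hq).pos) (dvd_prod_of_mem _ hp))
  obtain ⟨b, hbB, hb⟩ := hbasis _ hNY
  obtain ⟨i, Z, hZY, hYZ, hbi⟩ := exists_factor_eq_prod_primes hYprime hb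
  obtain ⟨c, hc⟩ := hTc #Z (hYk ▸ card_le_card hZY)
  refine ⟨#Z, Nat.le_of_mul_le_mul_left (hYk ▸ hYZ) Fintype.card_pos, T, hT, hTprime,
    fun Y' hY'T hY' => ?_⟩
  rw [hc Y' hY'T hY', ← hc Z ((coe_subset.mpr hZY).trans hYT) rfl, ← hbi]
  exact hbB i

theorem injective_fiberProd {Ω κ : Type*} [Fintype Ω] [DecidableEq κ] {p : Ω → ℕ}
    (hp : ∀ ω, (p ω).Prime) (hinj : Injective p) :
    Injective fun (ρ : Ω → κ) (i : κ) => ∏ ω with ρ ω = i, p ω := by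
  intro ρ ρ' H
  funext ω
  have hfiber := congr_fun H (ρ ω)
  dsimp only at hfiber
  have hdvd : p ω ∣ ∏ ω' with ρ' ω' = ρ ω, p ω' :=
    hfiber ▸ dvd_prod_of_mem p (mem_filter.mpr ⟨mem_univ ω, rfl⟩)
  obtain ⟨ω', hω', hpω'⟩ := ((hp ω).prime.dvd_finsetProd_iff p).mp hdvd
  obtain rfl : ω = ω' := hinj ((Nat.prime_dvd_prime_iff_eq (hp ω) (hp ω')).mp hpω')
  exact (mem_filter.mp hω').2.symm

theorem card_filter_fst_comp_perm {ι : Type*} [Fintype ι] [DecidableEq ι] {M : ℕ}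
    (σ : Equiv.Perm (ι × Fin M)) (i : ι) : #{ω | (σ ω).1 = i} = M := by
  rw [← card_map σ.toEmbedding, map_filter]
  simp only [comp_apply, Equiv.apply_symm_apply, univ_map_embedding]
  rw [← univ_product_univ, filter_product_left (fun a => a = i), card_product, filter_eq',
    if_pos (mem_univ i), card_singleton, card_univ, Fintype.card_fin, one_mul]

theorem fiberProd_mem_productReps {Ω ι : Type*} [Fintype Ω] [Fintype ι] [DecidableEq ι]
    {B T : Set ℕ} {M : ℕ} (hB : ∀ Y : Finset ℕ, ↑Y ⊆ T → #Y = M → ∏ p ∈ Y, p ∈ B)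
    {p : Ω → ℕ} (hinj : Injective p) (hpT : ∀ ω, p ω ∈ T) {ρ : Ω → ι}
    (hρ : ∀ i, #{ω | ρ ω = i} = M) :
    (fun i => ∏ ω with ρ ω = i, p ω) ∈ productReps B ι (∏ ω, p ω) := by
  refine ⟨fun i => ?_, prod_fiberwise univ ρ p⟩
  show ∏ ω with ρ ω = i, p ω ∈ B
  rw [← prod_image (f := fun x => x) hinj.injOn]
  refine hB _ ?_ (by rw [card_image_of_injective _ hinj, hρ])
  intro x hx
  obtain ⟨ω, -, rfl⟩ := mem_image.mp hx
  exact hpT ω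

theorem le_ncard_productReps {ι : Type*} [Fintype ι] [DecidableEq ι] [Nontrivial ι]
    {B T : Set ℕ} (hT : T.Infinite) (hTprime : ∀ p ∈ T, p.Prime) {M : ℕ} (hM : 0 < M)
    (hB : ∀ Y : Finset ℕ, ↑Y ⊆ T → #Y = M → ∏ p ∈ Y, p ∈ B) :
    ∃ n, M ≤ (productReps B ι n).ncard := by
  obtain ⟨i₁, i₂, hne⟩ := exists_pair_ne ι
  let e : ι × Fin M ↪ T :=
    (Fintype.equivFin _).toEmbedding.trans (Fin.valEmbedding.trans hT.natEmbedding)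
  set p : ι × Fin M → ℕ := fun ω => e ω
  have hinj : Injective p := Subtype.val_injective.comp e.injective
  have hpT (ω : ι × Fin M) : p ω ∈ T := (e ω).2
  let ρ (j : Fin M) (ω : ι × Fin M) : ι := (Equiv.swap (i₁, j) (i₂, ⟨0, hM⟩) ω).1
  have ρ_injective : Injective ρ := by
    intro j j' h
    by_contra hjj'
    have moved : ρ j (i₁, j) = i₂ := by simp [ρ]
    have fixed : ρ j' (i₁, j) = i₁ := by simp [ρ, Equiv.swap_apply_of_ne_of_ne, hjj', hne]
    exact hne (fixed.symm.trans ((congr_fun h _).symm.trans moved))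
  refine ⟨∏ ω, p ω, ?_⟩
  calc M = (Set.univ : Set (Fin M)).ncard := by simp
    _ ≤ _ := Set.ncard_le_ncard_of_injOn (fun j i => ∏ ω with ρ j ω = i, p ω)
      (fun j _ => fiberProd_mem_productReps hB hinj hpT (card_filter_fst_comp_perm _))
      ((injective_fiberProd (fun ω => hTprime _ (hpT ω)) hinj).comp ρ_injective).injOn
      (productReps_finite B ι (prod_ne_zero_iff.mpr fun ω _ => (hTprime _ (hpT ω)).ne_zero))

theorem multiplicative_basis_unbounded_general (h : ℕ) (hh : 2 ≤ h)
    (B : Set ℕ)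
    (g : ℕ → ℕ)
    (hg : ∀ n, g n = {b : Fin h → ℕ | (∀ i, b i ∈ B) ∧ ∏ i, b i = n}.ncard)
    (hbasis : ∃ N, ∀ n, N ≤ n → 1 ≤ g n) :
    ∀ m : ℕ, ∃ n : ℕ, m ≤ g n := by
  intro m
  have : Nontrivial (Fin h) := Fin.nontrivial_iff_two_le.mpr hh
  have hg' (n : ℕ) : g n = (productReps B (Fin h) n).ncard := hg n
  obtain ⟨N, hN⟩ := hbasis
  have hreps (n : ℕ) (hn : N ≤ n) : (productReps B (Fin h) n).Nonempty :=
    Set.nonempty_of_ncard_ne_zero (by have := hN n hn; rw [hg'] at this; omega)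
  obtain ⟨M, hmM, T, hT, hTprime, hTB⟩ :=
    exists_infinite_primes_forall_card_eq_prod_mem hreps m.succ_pos
  obtain ⟨n, hn⟩ := le_ncard_productReps (ι := Fin h) hT hTprime (by omega) hTB
  exact ⟨n, by rw [hg']; omega⟩

/-- The representation function of an asymptotic multiplicative basis of order `h ≥ 2`
is unbounded: if every sufficiently large positive integer is a product of `h` elements
of `B`, then for every `m` some `n` has at least `m` ordered representations
`n = b₁ ⋯ b_h` with all `bᵢ ∈ B`. -/
theorem multiplicative_basis_unbounded (h : ℕ) (hh : 2 ≤ h)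
    (B : Set ℕ) (hBpos : ∀ b ∈ B, 0 < b)
    (g : ℕ → ℕ)
    (hg : ∀ n, g n = {b : Fin h → ℕ | (∀ i, b i ∈ B) ∧ ∏ i, b i = n}.ncard)
    (hbasis : ∃ N, ∀ n, N ≤ n → 1 ≤ g n) :
    ∀ m : ℕ, ∃ n : ℕ, m ≤ g n :=
  multiplicative_basis_unbounded_general h hh B g hg hbasis
end

section
/- Let B be a set of positive integers such that every sufficiently large positive integer is the product of two elements of B. Then for every m there exists n with at least m ordered representations n = b_1 b_2 with b_1, b_2 ∈ B. -/
/-!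
Colour each `k`-set of large primes by the positions (in increasing order) of the primes making
up `b₁` in some factorization `∏ = b₁ * b₂` with `b₁, b₂ ∈ B`. By Ramsey's theorem the colour `I`
is constant on the `k`-subsets of an infinite set of primes `y 0 < y 1 < ⋯`. Any `#I` of these
primes whose indices are far enough apart occupy the positions `I` of some `k`-subset, so their
product lies in `B`; likewise for `k - #I` primes and `Iᶜ`. Hence the product of `k` such primes
has at least `choose k #I ≥ k` representations when `0 < #I < k`; when `I` is trivial the same
argument runs with `2 * k` primes split into two halves.
-/

open Finset Function

def mulReps (B : Set ℕ) (n : ℕ) : Set (ℕ × ℕ) := {p | p.1 ∈ B ∧ p.2 ∈ B ∧ p.1 * p.2 = n}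

lemma mulReps_finite (B : Set ℕ) {n : ℕ} (hn : n ≠ 0) : (mulReps B n).Finite :=
  n.divisorsAntidiagonal.finite_toSet.subset fun p hp => by
    simpa [Nat.mem_divisorsAntidiagonal, hn] using hp.2.2

theorem Nat.le_choose_of_pos_of_lt {n t : ℕ} (ht : 0 < t) (htn : t < n) : n ≤ n.choose t := by
  induction n generalizing t with
  | zero => omega
  | succ n ih =>
    obtain rfl | ht1 := eq_or_ne t 1
    · simp
    obtain rfl | htn' := eq_or_ne t n
    · simp
    obtain ⟨s, rfl⟩ := Nat.exists_eq_add_one_of_ne_zero ht.ne'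
    rw [Nat.choose_succ_succ']
    have := ih (t := s + 1) (by omega) (by omega)
    have := Nat.choose_pos (show s ≤ n by omega)
    omega

lemma exists_subset_prod_eq_of_mul_eq_prod {ι : Type*} [DecidableEq ι] {q : ι → ℕ}
    (s : Finset ι) (hq : ∀ i ∈ s, (q i).Prime) {b₁ b₂ : ℕ} (h : b₁ * b₂ = ∏ i ∈ s, q i) :
    ∃ I ⊆ s, b₁ = ∏ i ∈ I, q i ∧ b₂ = ∏ i ∈ s \ I, q i := by
  induction s using Finset.induction_on generalizing b₁ b₂ with
  | empty => exact ⟨∅, subset_rfl, by simp_all⟩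
  | @insert j s hj ih =>
    have hqj := hq j (mem_insert_self j s)
    have hqs : ∀ i ∈ s, (q i).Prime := fun i hi => hq i (mem_insert_of_mem hi)
    rw [prod_insert hj] at h
    rcases (Nat.Prime.dvd_mul hqj).1 (Dvd.intro _ h.symm) with ⟨c, rfl⟩ | ⟨c, rfl⟩
    · obtain ⟨I, hI, rfl, rfl⟩ :=
        ih hqs (b₁ := c) (b₂ := b₂) (Nat.eq_of_mul_eq_mul_left hqj.pos (by rw [← h]; ring))
      refine ⟨insert j I, insert_subset_insert j hI, (prod_insert fun h => hj (hI h)).symm, ?_⟩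
      rw [insert_sdiff_insert, sdiff_insert_of_notMem hj]
    · obtain ⟨I, hI, rfl, rfl⟩ :=
        ih hqs (b₁ := b₁) (b₂ := c) (Nat.eq_of_mul_eq_mul_left hqj.pos (by rw [← h]; ring))
      refine ⟨I, hI.trans (subset_insert j s), rfl, ?_⟩
      rw [insert_sdiff_of_notMem _ fun h => hj (hI h), prod_insert fun h => hj (sdiff_subset h)]

lemma prod_injective_of_prime {ι : Type*} [DecidableEq ι] {y : ι → ℕ} (hy : Injective y)
    (hp : ∀ i, (y i).Prime) : Injective fun A : Finset ι => ∏ i ∈ A, y i := by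
  intro A A' h
  have key : ∀ A : Finset ι, (∏ i ∈ A, y i).primeFactors = A.image y := fun A => by
    rw [← Nat.primeFactors_prod (s := A.image y) (by simp [hp]), prod_image hy.injOn]
  exact image_injective hy (by rw [← key, ← key]; exact congrArg _ h)

lemma choose_le_ncard_mulReps {B : Set ℕ} {ι : Type*} [DecidableEq ι] {y : ι → ℕ}
    (hy : Injective y) (hp : ∀ i, (y i).Prime) (W : Finset ι) {a : ℕ}
    (ha : ∀ A ⊆ W, A.card = a → ∏ i ∈ A, y i ∈ B)
    (hb : ∀ A ⊆ W, A.card = W.card - a → ∏ i ∈ A, y i ∈ B) :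
    W.card.choose a ≤ (mulReps B (∏ i ∈ W, y i)).ncard := by
  set F := (W.powersetCard a).image fun A => (∏ i ∈ A, y i, ∏ i ∈ W \ A, y i)
  have hF : (F : Set (ℕ × ℕ)) ⊆ mulReps B (∏ i ∈ W, y i) := by
    simp only [F, coe_image, Set.image_subset_iff]
    intro A hA
    rw [mem_coe, mem_powersetCard] at hA
    exact ⟨ha A hA.1 hA.2, hb _ sdiff_subset (by rw [card_sdiff_of_subset hA.1, hA.2]),
      by rw [mul_comm, prod_sdiff hA.1]⟩
  calc W.card.choose a = F.card := by
        rw [card_image_of_injective _ fun A A' h => prod_injective_of_prime hy hp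
          (congrArg Prod.fst h), card_powersetCard]
    _ = (F : Set (ℕ × ℕ)).ncard := (Set.ncard_coe_finset F).symm
    _ ≤ _ := Set.ncard_le_ncard hF
      (mulReps_finite B (prod_ne_zero_iff.2 fun i _ => (hp i).ne_zero))

/-- Infinite Ramsey theorem; a `k`-subset of `ℕ` is encoded by its increasing enumeration
`Fin k → ℕ`. -/
theorem exists_infinite_subset_monochromatic {C : Type*} [Finite C] (k : ℕ)
    (c : (Fin k → ℕ) → C) {X : Set ℕ} (hX : X.Infinite) :
    ∃ Z ⊆ X, Z.Infinite ∧
      ∃ col, ∀ g : Fin k → ℕ, StrictMono g → (∀ i, g i ∈ Z) → c g = col := by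
  induction k generalizing X with
  | zero =>
    exact ⟨X, subset_rfl, hX, c Fin.elim0, fun g _ _ => congrArg c (Subsingleton.elim _ _)⟩
  | succ k ih =>
    have step : ∀ Y : {Y : Set ℕ // Y.Infinite}, ∃ a ∈ Y.1,
        ∃ Y' : {Y' : Set ℕ // Y'.Infinite}, ∃ d : C, Y'.1 ⊆ Y.1 ∧ (∀ y ∈ Y'.1, a < y) ∧
          ∀ g : Fin k → ℕ, StrictMono g → (∀ i, g i ∈ Y'.1) → c (Fin.cons a g) = d := by
      rintro ⟨Y, hY⟩
      obtain ⟨a, ha⟩ := hY.nonempty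
      obtain ⟨Y', hY', hY'inf, d, hd⟩ :=
        ih (fun g => c (Fin.cons a g)) (hY.sdiff (Set.finite_Iic a))
      exact ⟨a, ha, ⟨Y', hY'inf⟩, d, hY'.trans Set.sdiff_subset,
        fun y hy => not_le.1 (hY' hy).2, hd⟩
    choose a ha next col hsub hlt hcol using step
    set Xs : ℕ → {Y : Set ℕ // Y.Infinite} := fun n => next^[n] ⟨X, hX⟩
    have hXs_succ : ∀ n, Xs (n + 1) = next (Xs n) := fun n => iterate_succ_apply' next n _
    have hanti : Antitone fun n => (Xs n).1 :=
      antitone_nat_of_succ_le fun n => hXs_succ n ▸ hsub (Xs n)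
    have hmono : StrictMono fun n => a (Xs n) :=
      strictMono_nat_of_lt_succ fun n => hlt _ _ (hXs_succ n ▸ ha (Xs (n + 1)))
    obtain ⟨col₀, hcol₀⟩ := Finite.exists_infinite_fiber fun n => col (Xs n)
    refine ⟨(fun n => a (Xs n)) '' {n | col (Xs n) = col₀}, ?_, ?_, col₀, ?_⟩
    · rintro _ ⟨n, -, rfl⟩
      exact hanti (Nat.zero_le n) (ha (Xs n))
    · exact (Set.infinite_coe_iff.1 hcol₀).image hmono.injective.injOn
    · intro g hg hgZ
      obtain ⟨n, hn, hgn⟩ := hgZ 0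
      rw [← Fin.cons_self_tail g, ← hgn, ← hn]
      refine hcol (Xs n) _ (hg.comp Fin.strictMono_succ) fun i => ?_
      obtain ⟨m, -, hgm⟩ := hgZ i.succ
      have hnm : n < m :=
        hmono.lt_iff_lt.1 (hgn.trans_lt ((hg (Fin.succ_pos i)).trans_eq hgm.symm))
      rw [← hXs_succ]
      exact hanti hnm (hgm ▸ ha (Xs m) : g i.succ ∈ (Xs m).1)

lemma exists_strictMono_image_eq {k : ℕ} {J : Finset (Fin k)} {A : Finset ℕ}
    (hcard : J.card = A.card) (hlow : ∀ a ∈ A, k ≤ a)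
    (hgap : ∀ a ∈ A, ∀ b ∈ A, a < b → a + k ≤ b) :
    ∃ f : Fin k → ℕ, StrictMono f ∧ J.image f = A := by
  set e := J.orderEmbOfFin rfl
  set α := A.orderEmbOfFin hcard.symm
  have hαA : ∀ j, α j ∈ A := A.orderEmbOfFin_mem hcard.symm
  set δ : Fin J.card → ℕ := fun j => α j - e j
  have hαe : ∀ j, e j + δ j = α j := fun j => by
    have := hlow _ (hαA j)
    have := (e j).isLt
    simp only [δ]
    omega
  have hδ : Monotone δ := by
    intro j j' hjj'
    obtain rfl | hlt := hjj'.eq_or_lt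
    · exact le_rfl
    have := hgap _ (hαA j) _ (hαA j') (α.strictMono hlt)
    have := (e j').isLt
    simp only [δ]
    omega
  -- `f i = i + max {α j - e j | e j ≤ i}` is strictly increasing because `δ` is monotone.
  set f : Fin k → ℕ := fun i => i + (univ.filter fun j => e j ≤ i).sup δ
  have hfe : ∀ j, f (e j) = α j := by
    intro j
    have : (univ.filter fun j' => e j' ≤ e j).sup δ = δ j :=
      le_antisymm (Finset.sup_le fun j' hj' => hδ (e.le_iff_le.1 (mem_filter.1 hj').2))
        (le_sup (mem_filter.2 ⟨mem_univ j, le_rfl⟩))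
    simp only [f, this, hαe]
  refine ⟨f, fun i i' hii' => add_lt_add_of_lt_of_le hii' (sup_mono fun j hj =>
    mem_filter.2 ⟨mem_univ j, (mem_filter.1 hj).2.trans hii'.le⟩), ?_⟩
  rw [← coe_inj, coe_image, ← J.range_orderEmbOfFin rfl, ← Set.range_comp,
    show f ∘ e = α from funext hfe, A.range_orderEmbOfFin]

lemma exists_strictMono_prime_homogeneous {B : Set ℕ} {N : ℕ}
    (hrep : ∀ n, N ≤ n → ∃ b₁ ∈ B, ∃ b₂ ∈ B, b₁ * b₂ = n) {k : ℕ} (hk : k ≠ 0) :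
    ∃ y : ℕ → ℕ, StrictMono y ∧ (∀ i, (y i).Prime) ∧ ∃ I : Finset (Fin k),
      ∀ f : Fin k → ℕ, StrictMono f → ∏ i ∈ I, y (f i) ∈ B ∧ ∏ i ∈ Iᶜ, y (f i) ∈ B := by
  classical
  set X : Set ℕ := {p | p.Prime ∧ N ≤ p}
  have hX : X.Infinite := Set.infinite_of_forall_exists_gt fun a => by
    obtain ⟨p, hp, hprime⟩ := Nat.exists_infinite_primes (max N (a + 1))
    exact ⟨p, ⟨hprime, le_of_max_le_left hp⟩, le_of_max_le_right hp⟩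
  set Split : (Fin k → ℕ) → Finset (Fin k) → Prop :=
    fun g I => ∏ i ∈ I, g i ∈ B ∧ ∏ i ∈ Iᶜ, g i ∈ B
  have hsplit : ∀ g : Fin k → ℕ, (∀ i, g i ∈ X) → ∃ I, Split g I := by
    intro g hg
    have hN : N ≤ ∏ i, g i := (hg ⟨0, k.pos_of_ne_zero hk⟩).2.trans <|
      Nat.le_of_dvd (prod_pos fun i _ => (hg i).1.pos) (dvd_prod_of_mem _ (mem_univ _))
    obtain ⟨b₁, hb₁, b₂, hb₂, h⟩ := hrep _ hN
    obtain ⟨I, -, rfl, rfl⟩ := exists_subset_prod_eq_of_mul_eq_prod univ (fun i _ => (hg i).1) h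
    exact ⟨I, hb₁, by rwa [compl_eq_univ_sdiff]⟩
  obtain ⟨Z, hZX, hZ, I, hI⟩ :=
    exists_infinite_subset_monochromatic k (fun g => Classical.epsilon (Split g)) hX
  have hmem : ∀ i, Nat.nth (· ∈ Z) i ∈ Z := Nat.nth_mem_of_infinite hZ
  refine ⟨Nat.nth (· ∈ Z), Nat.nth_strictMono hZ, fun i => (hZX (hmem i)).1, I, fun f hf => ?_⟩
  have hcol := hI (fun i => Nat.nth (· ∈ Z) (f i)) ((Nat.nth_strictMono hZ).comp hf)
    fun i => hmem (f i)
  have := Classical.epsilon_spec (hsplit _ fun i => hZX (hmem (f i)))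
  rwa [hcol] at this

lemma prod_mem_of_forall_strictMono {B : Set ℕ} {k : ℕ} {y : ℕ → ℕ} {J : Finset (Fin k)}
    (hJ : ∀ f : Fin k → ℕ, StrictMono f → ∏ i ∈ J, y (f i) ∈ B) {A : Finset ℕ}
    (hcard : J.card = A.card) (hlow : ∀ a ∈ A, k ≤ a)
    (hgap : ∀ a ∈ A, ∀ b ∈ A, a < b → a + k ≤ b) : ∏ a ∈ A, y a ∈ B := by
  obtain ⟨f, hf, rfl⟩ := exists_strictMono_image_eq hcard hlow hgap
  rw [prod_image hf.injective.injOn]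
  exact hJ f hf

lemma exists_card_add_card_le_ncard_mulReps {B : Set ℕ} {k : ℕ} {y : ℕ → ℕ}
    (hy : Injective y) (hp : ∀ i, (y i).Prime) {J₁ J₂ : Finset (Fin k)}
    (h₁ : ∀ f : Fin k → ℕ, StrictMono f → ∏ i ∈ J₁, y (f i) ∈ B)
    (h₂ : ∀ f : Fin k → ℕ, StrictMono f → ∏ i ∈ J₂, y (f i) ∈ B)
    (hJ₁ : J₁.Nonempty) (hJ₂ : J₂.Nonempty) :
    ∃ n, J₁.card + J₂.card ≤ (mulReps B n).ncard := by
  set W := (range (J₁.card + J₂.card)).image fun x => k * (x + 1)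
  have hk : 0 < k := hJ₁.card_pos.trans_le (card_le_univ J₁) |>.trans_eq (Fintype.card_fin k)
  have hW : W.card = J₁.card + J₂.card :=
    (card_image_of_injective _ (show Injective fun x => k * (x + 1) from fun x x' h => by
      simpa [hk.ne'] using h)).trans (card_range _)
  have hlow : ∀ a ∈ W, k ≤ a := by
    simp only [W, mem_image]
    rintro _ ⟨x, -, rfl⟩
    exact Nat.le_mul_of_pos_right k x.succ_pos
  have hgap : ∀ a ∈ W, ∀ b ∈ W, a < b → a + k ≤ b := by
    simp only [W, mem_image]
    rintro _ ⟨x, -, rfl⟩ _ ⟨x', -, rfl⟩ h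
    have : x + 1 < x' + 1 := lt_of_mul_lt_mul_left h k.zero_le
    calc k * (x + 1) + k = k * (x + 2) := by ring
      _ ≤ k * (x' + 1) := Nat.mul_le_mul_left k this
  refine ⟨∏ i ∈ W, y i, le_trans ?_ (choose_le_ncard_mulReps hy hp W (a := J₁.card)
    (fun A hA hcard => prod_mem_of_forall_strictMono h₁ hcard.symm
      (fun a ha => hlow a (hA ha)) fun a ha b hb => hgap a (hA ha) b (hA hb))
    (fun A hA hcard => prod_mem_of_forall_strictMono h₂ (by omega)
      (fun a ha => hlow a (hA ha)) fun a ha b hb => hgap a (hA ha) b (hA hb)))⟩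
  rw [hW]
  exact Nat.le_choose_of_pos_of_lt hJ₁.card_pos (by have := hJ₂.card_pos; omega)

theorem erdos_multiplicative_basis_order_two_general
    (B : Set ℕ)
    (g : ℕ → ℕ)
    (hg : ∀ n, g n = {p : ℕ × ℕ | p.1 ∈ B ∧ p.2 ∈ B ∧ p.1 * p.2 = n}.ncard)
    (hbasis : ∃ N, ∀ n, N ≤ n → 1 ≤ g n) :
    ∀ m : ℕ, ∃ n : ℕ, m ≤ g n := by
  intro m
  obtain ⟨N, hN⟩ := hbasis
  have hrep : ∀ n, N ≤ n → ∃ b₁ ∈ B, ∃ b₂ ∈ B, b₁ * b₂ = n := fun n hn => by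
    have h₁ := hN n hn
    rw [hg, Nat.one_le_iff_ne_zero] at h₁
    obtain ⟨⟨b₁, b₂⟩, hb₁, hb₂, h⟩ := Set.nonempty_of_ncard_ne_zero h₁
    exact ⟨b₁, hb₁, b₂, hb₂, h⟩
  obtain ⟨y, hy, hp, I, hI⟩ := exists_strictMono_prime_homogeneous hrep (k := m + 1) (by omega)
  suffices ∃ n, m + 1 ≤ (mulReps B n).ncard by
    obtain ⟨n, hn⟩ := this
    exact ⟨n, by rw [hg]; exact (Nat.le_succ m).trans hn⟩
  rcases I.eq_empty_or_nonempty with rfl | hI₁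
  · have hcompl := fun f hf => (hI f hf).2
    rw [compl_empty] at hcompl
    obtain ⟨n, hn⟩ := exists_card_add_card_le_ncard_mulReps hy.injective hp hcompl hcompl
      univ_nonempty univ_nonempty
    exact ⟨n, by simpa using (Nat.le_add_right _ _).trans hn⟩
  rcases Iᶜ.eq_empty_or_nonempty with hI₂ | hI₂
  · obtain rfl : I = univ := (compl_eq_empty_iff I).1 hI₂
    obtain ⟨n, hn⟩ := exists_card_add_card_le_ncard_mulReps hy.injective hp
      (fun f hf => (hI f hf).1) (fun f hf => (hI f hf).1) hI₁ hI₁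
    exact ⟨n, by simpa using (Nat.le_add_right _ _).trans hn⟩
  obtain ⟨n, hn⟩ := exists_card_add_card_le_ncard_mulReps hy.injective hp
    (fun f hf => (hI f hf).1) (fun f hf => (hI f hf).2) hI₁ hI₂
  exact ⟨n, by rwa [card_add_card_compl, Fintype.card_fin] at hn⟩

/-- Erdős's theorem: if every sufficiently large positive integer is a product of two
elements of `B`, then for every `m` there is an `n` with at least `m` ordered
representations `n = b₁ b₂` with `b₁, b₂ ∈ B`. -/
theorem erdos_multiplicative_basis_order_two
    (B : Set ℕ) (hBpos : ∀ b ∈ B, 0 < b)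
    (g : ℕ → ℕ)
    (hg : ∀ n, g n = {p : ℕ × ℕ | p.1 ∈ B ∧ p.2 ∈ B ∧ p.1 * p.2 = n}.ncard)
    (hbasis : ∃ N, ∀ n, N ≤ n → 1 ≤ g n) :
    ∀ m : ℕ, ∃ n : ℕ, m ≤ g n :=
  erdos_multiplicative_basis_order_two_general B g hg hbasis
end

section
/- Let h ≥ 2, t ≥ 1, and define B_1 = ℕ (positive integers), B_2 = {2^k : 0 ≤ k ≤ t−1}, and B_i = {1} for 3 ≤ i ≤ h. For n = 2^{ℓ−1} m with m odd and ℓ ≥ 1, the number of ordered h-tuples (b_1,...,b_h) ∈ B_1 × ... × B_h with n = b_1 ⋯ b_h equals min(ℓ, t). Consequently liminf g_𝓑 = 1 and limsup g_𝓑 = t. -/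
/-!
Every coordinate other than the first two is forced to be `1`, and the first one is then
determined by the second, so a representation of `n ≠ 0` is the same as a divisor `2 ^ k ∣ n`
with `k < t`. There are `min (ν₂ n + 1) t` of those, which lies in `[1, t]`, equals `1` at odd `n`
and `t` at multiples of `2 ^ (t - 1)`.
-/

open Filter

section Factorizations

variable {ι : Type*} [Fintype ι] [DecidableEq ι] {B : ι → Set ℕ} {i₀ i₁ : ι}

theorem ncard_factorizations_eq_ncard_dvd (hi : i₀ ≠ i₁) (hB₀ : B i₀ = {m | 0 < m})
    (hB : ∀ i, i ≠ i₀ → i ≠ i₁ → B i = {1}) {n : ℕ} (hn : n ≠ 0) :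
    {b : ι → ℕ | (∀ i, b i ∈ B i) ∧ ∏ i, b i = n}.ncard = {d | d ∈ B i₁ ∧ d ∣ n}.ncard := by
  set σ : ℕ → ι → ℕ := fun d i => if i = i₀ then n / d else if i = i₁ then d else 1
  have hσ : σ.Injective := fun d d' h => by simpa [σ, hi.symm] using congrFun h i₁
  have hprod : ∀ b : ι → ℕ, (∀ i, b i ∈ B i) → ∏ i, b i = b i₀ * b i₁ := fun b hb =>
    Fintype.prod_eq_mul i₀ i₁ hi fun i ⟨h₀, h₁⟩ => by simpa [hB i h₀ h₁] using hb i
  suffices {b : ι → ℕ | (∀ i, b i ∈ B i) ∧ ∏ i, b i = n} = σ '' {d | d ∈ B i₁ ∧ d ∣ n} by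
    rw [this, Set.ncard_image_of_injective _ hσ]
  ext b
  constructor
  · rintro ⟨hb, hbn⟩
    rw [hprod b hb] at hbn
    have hb₁ : b i₁ ≠ 0 := right_ne_zero_of_mul (hbn ▸ hn)
    refine ⟨b i₁, ⟨hb i₁, Dvd.intro_left _ hbn⟩, funext fun i => ?_⟩
    by_cases h₀ : i = i₀
    · subst h₀
      simp [σ, ← hbn, Nat.mul_div_cancel _ (Nat.pos_of_ne_zero hb₁)]
    by_cases h₁ : i = i₁
    · simp [σ, h₁, hi.symm]
    · have hbi := hb i
      rw [hB i h₀ h₁] at hbi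
      simp [σ, h₀, h₁, Set.mem_singleton_iff.1 hbi]
  · rintro ⟨d, ⟨hd, hdn⟩, rfl⟩
    have hb : ∀ i, σ d i ∈ B i := fun i => by
      by_cases h₀ : i = i₀
      · subst h₀
        simpa [σ, hB₀] using Nat.div_pos (Nat.le_of_dvd (Nat.pos_of_ne_zero hn) hdn)
          (Nat.pos_of_dvd_of_pos hdn (Nat.pos_of_ne_zero hn))
      by_cases h₁ : i = i₁
      · simpa [σ, h₁, hi.symm] using hd
      · simp [σ, h₀, h₁, hB i h₀ h₁]
    refine ⟨hb, ?_⟩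
    rw [hprod _ hb]
    simpa [σ, hi.symm] using Nat.div_mul_cancel hdn

end Factorizations

theorem ncard_two_pow_dvd (t : ℕ) {n : ℕ} (hn : n ≠ 0) :
    {d | (∃ k < t, d = 2 ^ k) ∧ d ∣ n}.ncard = min (n.factorization 2 + 1) t := by
  suffices {d | (∃ k < t, d = 2 ^ k) ∧ d ∣ n} = (2 ^ ·) '' Set.Iio (min (n.factorization 2 + 1) t) by
    rw [this, Set.ncard_image_of_injective _ (Nat.pow_right_injective le_rfl), Set.ncard_Iio_nat]
  ext d
  simp only [Set.mem_image, Set.mem_Iio, lt_min_iff, Nat.lt_succ_iff,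
    ← Nat.prime_two.pow_dvd_iff_le_factorization hn]
  constructor
  · rintro ⟨⟨k, hk, rfl⟩, hdvd⟩
    exact ⟨k, ⟨hdvd, hk⟩, rfl⟩
  · rintro ⟨k, ⟨hdvd, hk⟩, rfl⟩
    exact ⟨⟨k, hk, rfl⟩, hdvd⟩

theorem Nat.factorization_two_pow_mul_of_odd (k : ℕ) {m : ℕ} (hm : Odd m) :
    (2 ^ k * m).factorization 2 = k := by
  rw [Nat.factorization_mul (by positivity) hm.pos.ne', Finsupp.add_apply,
    Nat.factorization_pow_self Nat.prime_two,
    Nat.factorization_eq_zero_of_not_dvd hm.not_two_dvd_nat, add_zero]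

theorem Filter.liminf_limsup_eq_of_eventually_mem_Icc {α β : Type*}
    [ConditionallyCompleteLinearOrder α] {f : Filter β} [f.NeBot] {u : β → α} {a b : α}
    (hu : ∀ᶠ x in f, u x ∈ Set.Icc a b) (ha : ∃ᶠ x in f, u x = a) (hb : ∃ᶠ x in f, u x = b) :
    liminf u f = a ∧ limsup u f = b := by
  have hge : ∀ᶠ x in f, a ≤ u x := hu.mono fun _ h => h.1
  have hle : ∀ᶠ x in f, u x ≤ b := hu.mono fun _ h => h.2
  exact ⟨le_antisymm (liminf_le_of_frequently_le (ha.mono fun _ h => h.le) ⟨a, hge⟩)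
      (le_liminf_of_le (isCoboundedUnder_ge_of_eventually_le f hle) hge),
    le_antisymm (limsup_le_of_le (isCoboundedUnder_le_of_eventually_le f hge) hle)
      (le_limsup_of_frequently_le (hb.mono fun _ h => h.ge) ⟨b, hle⟩)⟩

/-- The construction achieving `(liminf, limsup) = (1, t)`: let `h ≥ 2`, `t ≥ 1`,
`B 1 = ℕ` (positive integers), `B 2 = {2^k : 0 ≤ k ≤ t-1}` and `B i = {1}` for `i ≥ 3`.
Then `g (2^(ℓ-1) m) = min ℓ t` for `m` odd and `ℓ ≥ 1`, and
`liminf g = 1`, `limsup g = t`. -/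
theorem liminf_one_limsup_t_construction (h t : ℕ) (hh : 2 ≤ h) (ht : 1 ≤ t)
    (B : Fin h → Set ℕ)
    (hB : ∀ i : Fin h, B i =
      if (i : ℕ) = 0 then {m : ℕ | 0 < m}
      else if (i : ℕ) = 1 then {m : ℕ | ∃ k < t, m = 2 ^ k}
      else {1})
    (g : ℕ → ℕ)
    (hg : ∀ n, g n = {b : Fin h → ℕ | (∀ i, b i ∈ B i) ∧ ∏ i, b i = n}.ncard) :
    (∀ ℓ m : ℕ, 1 ≤ ℓ → Odd m → g (2 ^ (ℓ - 1) * m) = min ℓ t) ∧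
    Filter.liminf g Filter.atTop = 1 ∧
    Filter.limsup g Filter.atTop = t := by
  have hg_eq : ∀ n ≠ 0, g n = min (n.factorization 2 + 1) t := fun n hn => by
    rw [hg, ncard_factorizations_eq_ncard_dvd (i₀ := ⟨0, by omega⟩) (i₁ := ⟨1, by omega⟩)
      (by simp [Fin.ext_iff]) (by simp [hB]) (fun i h₀ h₁ => ?_) hn, hB ⟨1, _⟩]
    · simpa using ncard_two_pow_dvd t hn
    · simp_all [Fin.ext_iff]
  have hg_odd : ∀ ℓ m : ℕ, 1 ≤ ℓ → Odd m → g (2 ^ (ℓ - 1) * m) = min ℓ t := fun ℓ m hℓ hm => by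
    rw [hg_eq _ (mul_pos (by positivity) hm.pos).ne', Nat.factorization_two_pow_mul_of_odd _ hm, Nat.sub_add_cancel hℓ]
  refine ⟨hg_odd, liminf_limsup_eq_of_eventually_mem_Icc ?_ ?_ ?_⟩
  · filter_upwards [eventually_ne_atTop 0] with n hn
    rw [hg_eq n hn]
    exact ⟨le_min (by omega) ht, min_le_right _ _⟩
  · refine frequently_atTop.2 fun N => ⟨2 ^ (1 - 1) * (2 * N + 1), by omega, ?_⟩
    rw [hg_odd 1 _ le_rfl (odd_two_mul_add_one N)]
    omega
  · refine frequently_atTop.2 fun N => ⟨2 ^ (t - 1) * (2 * N + 1), ?_, ?_⟩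
    · nlinarith [Nat.one_le_two_pow (n := t - 1)]
    · rw [hg_odd t _ ht (odd_two_mul_add_one N), min_self]
end

section
/- Let h ≥ 2 and 2 ≤ s ≤ h. Define B_1 = ℕ, B_i = P ∪ {1} (primes together with 1) for 2 ≤ i ≤ s, and B_i = {1} for s < i ≤ h. Then g_𝓑(p) = s for every prime p, g_𝓑(n) ≥ s for all n ≥ 2, and if n has k distinct prime factors then g_𝓑(n) ≥ k. Consequently liminf g_𝓑 = s and limsup g_𝓑 = ∞. -/
/-!
Every `B i` contains `1`, so a factorization of a prime `p` has exactly one entry `p`, sitting in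
one of the `s` slots whose set contains `p`. For `n ≥ 2` and a prime `q ∣ n`, putting `q` in such a
slot and `n / q` in the first slot (where every positive integer is allowed) gives pairwise distinct
factorizations of `n`: varying the slot gives `g n ≥ s`, varying `q` gives `g n ≥ ω(n)`. Primes pin
the liminf at `s`, and products of many distinct primes make `g` unbounded.
-/

open Finset Filter

theorem Pi.mulSingle_left_injective {ι M : Type*} [DecidableEq ι] [One M] {x : M} (hx : x ≠ 1) :
    Function.Injective fun i : ι => Pi.mulSingle i x := by
  intro i j hij
  by_contra hne
  simpa [Pi.mulSingle_eq_of_ne hne, hx] using congrFun hij i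

theorem Nat.eq_mulSingle_of_prod_eq_prime {ι : Type*} [Fintype ι] [DecidableEq ι] {p : ℕ}
    (hp : p.Prime) {b : ι → ℕ} (hb : ∏ i, b i = p) :
    ∃ i, b = Pi.mulSingle i p := by
  obtain ⟨i, -, hpi⟩ := (hp.prime.dvd_finsetProd_iff b).1 (by rw [hb])
  have hbi : b i = p := Nat.dvd_antisymm (hb ▸ dvd_prod_of_mem b (mem_univ i)) hpi
  have hrest : ∏ k ∈ univ.erase i, b k = 1 := by
    rw [← mul_prod_erase univ b (mem_univ i), hbi] at hb
    exact (Nat.mul_eq_left hp.ne_zero).1 hb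
  refine ⟨i, funext fun j => ?_⟩
  rcases eq_or_ne j i with rfl | hji
  · simpa using hbi
  · simpa [hji] using Nat.dvd_one.1 (hrest ▸ dvd_prod_of_mem b (mem_erase.2 ⟨hji, mem_univ j⟩))

def factorizations {ι : Type*} [Fintype ι] (B : ι → Set ℕ) (n : ℕ) : Set (ι → ℕ) :=
  {b | (∀ i, b i ∈ B i) ∧ ∏ i, b i = n}

namespace factorizations

variable {ι : Type*} [Fintype ι] {B : ι → Set ℕ} {n : ℕ}

theorem finite (hn : n ≠ 0) : (factorizations B n).Finite := by
  refine (Set.Finite.pi' fun _ => Set.finite_Iic n).subset ?_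
  rintro b ⟨-, hprod⟩ i
  exact Nat.le_of_dvd (Nat.pos_of_ne_zero hn) (hprod ▸ dvd_prod_of_mem b (mem_univ i))

variable [DecidableEq ι]

theorem eq_image_mulSingle_of_prime (hone : ∀ i, 1 ∈ B i) {p : ℕ} (hp : p.Prime) :
    factorizations B p = (fun i => Pi.mulSingle i p) '' {i | p ∈ B i} := by
  ext b
  constructor
  · rintro ⟨hmem, hprod⟩
    obtain ⟨i, rfl⟩ := Nat.eq_mulSingle_of_prod_eq_prime hp hprod
    exact ⟨i, by simpa using hmem i, rfl⟩
  · rintro ⟨i, hi, rfl⟩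
    refine ⟨fun j => ?_, by simp⟩
    rcases eq_or_ne j i with rfl | hji
    · simpa using hi
    · simpa [hji] using hone j

theorem ncard_of_prime (hone : ∀ i, 1 ∈ B i) {p : ℕ} (hp : p.Prime) :
    (factorizations B p).ncard = {i | p ∈ B i}.ncard :=
  eq_image_mulSingle_of_prime hone hp ▸
    Set.ncard_image_of_injective _ (Pi.mulSingle_left_injective hp.ne_one)

theorem mulSingle_div_mul_mulSingle_mem {z i : ι} (hz : ∀ m, 0 < m → m ∈ B z)
    (hone : ∀ j, 1 ∈ B j) {q : ℕ} (hqi : q ∈ B i) (hq : q ≠ 0) (hqn : q ∣ n) (hn : n ≠ 0) :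
    Pi.mulSingle z (n / q) * Pi.mulSingle i q ∈ factorizations B n := by
  refine ⟨fun j => ?_, ?_⟩
  · rcases eq_or_ne j z with rfl | hjz
    · refine hz _ (Nat.pos_of_ne_zero ?_)
      have := Nat.le_of_dvd (Nat.pos_of_ne_zero hn) hqn
      by_cases hji : j = i <;> simp [hji, Nat.div_eq_zero_iff, hq, this]
    · rcases eq_or_ne j i with rfl | hji
      · simpa [hjz] using hqi
      · simpa [hjz, hji] using hone j
  · simpa [prod_mul_distrib] using Nat.div_mul_cancel hqn

theorem ncard_setOf_mem_le_ncard_of_prime_dvd {z : ι} (hz : ∀ m, 0 < m → m ∈ B z)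
    (hone : ∀ j, 1 ∈ B j) {q : ℕ} (hq : q.Prime) (hqn : q ∣ n) (hn : n ≠ 0) :
    {i | q ∈ B i}.ncard ≤ (factorizations B n).ncard := by
  set f : ι → ι → ℕ := fun i => Pi.mulSingle z (n / q) * Pi.mulSingle i q
  have hne : ∀ i j, i ≠ j → i ≠ z → f i ≠ f j := fun i j hij hiz h => by
    simpa [f, hiz, hij, hq.ne_one] using congrFun h i
  refine Set.ncard_le_ncard_of_injOn f
    (fun i hi => mulSingle_div_mul_mulSingle_mem hz hone hi hq.ne_zero hqn hn)
    (fun i _ j _ h => ?_) (finite hn)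
  by_contra hij
  rcases eq_or_ne i z with rfl | hiz
  · exact hne j i (Ne.symm hij) (Ne.symm hij) h.symm
  · exact hne i j hij hiz h

theorem card_primeFactors_le_ncard {z o : ι} (hoz : o ≠ z) (hz : ∀ m, 0 < m → m ∈ B z)
    (ho : ∀ p : ℕ, p.Prime → p ∈ B o) (hone : ∀ j, 1 ∈ B j) (hn : n ≠ 0) :
    n.primeFactors.card ≤ (factorizations B n).ncard := by
  rw [← Set.ncard_coe_finset]
  refine Set.ncard_le_ncard_of_injOn (fun q => Pi.mulSingle z (n / q) * Pi.mulSingle o q)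
    (fun q hq => ?_) (fun q _ r _ h => by simpa [hoz] using congrFun h o) (finite hn)
  obtain ⟨hqp, hqn, -⟩ := Nat.mem_primeFactors.1 hq
  exact mulSingle_div_mul_mulSingle_mem hz hone (ho q hqp) hqp.ne_zero hqn hn

end factorizations

theorem Filter.liminf_eq_of_eventually_ge_of_frequently_le {α β : Type*}
    [ConditionallyCompleteLinearOrderBot β] {l : Filter α} {f : α → β} {s : β}
    (hge : ∀ᶠ n in l, s ≤ f n) (hle : ∃ᶠ n in l, f n ≤ s) : liminf f l = s :=
  le_antisymm (liminf_le_of_frequently_le hle) (le_liminf_of_le (.of_frequently_le hle) hge)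

theorem Nat.exists_card_primeFactors_eq (m : ℕ) : ∃ n, n ≠ 0 ∧ n.primeFactors.card = m := by
  obtain ⟨t, hts, htc⟩ := Nat.infinite_setOfPred_prime.exists_subset_card_eq m
  have hprime : ∀ p ∈ t, p.Prime := fun p hp => hts hp
  exact ⟨∏ p ∈ t, p, prod_ne_zero_iff.2 fun p hp => (hprime p hp).ne_zero,
    by rw [Nat.primeFactors_prod hprime, htc]⟩

theorem liminf_s_limsup_infty_construction_general (h s : ℕ) (hs2 : 2 ≤ s)
    (hsh : s ≤ h)
    (B : Fin h → Set ℕ)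
    (hB : ∀ i : Fin h, B i =
      if (i : ℕ) = 0 then {m : ℕ | 0 < m}
      else if (i : ℕ) < s then {m : ℕ | m.Prime ∨ m = 1}
      else {1})
    (g : ℕ → ℕ)
    (hg : ∀ n, g n = {b : Fin h → ℕ | (∀ i, b i ∈ B i) ∧ ∏ i, b i = n}.ncard) :
    (∀ p : ℕ, p.Prime → g p = s) ∧
    (∀ n : ℕ, 2 ≤ n → s ≤ g n) ∧
    (∀ n : ℕ, 0 < n → n.primeFactors.card ≤ g n) ∧
    Filter.liminf g Filter.atTop = s ∧
    (∀ m : ℕ, ∃ n : ℕ, m ≤ g n) := by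
  have hg' : ∀ n, g n = (factorizations B n).ncard := hg
  let z : Fin h := ⟨0, by omega⟩
  let o : Fin h := ⟨1, by omega⟩
  have hz : ∀ m, 0 < m → m ∈ B z := fun m hm => by simpa [hB, z] using hm
  have hone : ∀ i, 1 ∈ B i := fun i => by rw [hB]; split_ifs <;> simp
  have hprime_mem : ∀ p : ℕ, p.Prime → ∀ i : Fin h, p ∈ B i ↔ (i : ℕ) < s := by
    intro p hp i
    rw [hB]
    split_ifs <;> simp [hp, hp.ne_one, hp.pos] <;> omega
  have hcount : ∀ p : ℕ, p.Prime → {i | p ∈ B i}.ncard = s := fun p hp => by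
    simp_rw [hprime_mem p hp]
    rw [Set.ncard_eq_toFinset_card', Set.toFinset_ofPred, Fin.card_filter_val_lt, min_eq_right hsh]
  have hprimes : ∀ p : ℕ, p.Prime → g p = s := fun p hp => by
    rw [hg', factorizations.ncard_of_prime hone hp, hcount p hp]
  have hge : ∀ n : ℕ, 2 ≤ n → s ≤ g n := fun n hn => by
    have hq := Nat.minFac_prime (by omega : n ≠ 1)
    rw [hg', ← hcount _ hq]
    exact factorizations.ncard_setOf_mem_le_ncard_of_prime_dvd hz hone hq n.minFac_dvd (by omega)
  have homega : ∀ n : ℕ, 0 < n → n.primeFactors.card ≤ g n := fun n hn =>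
    hg' n ▸ factorizations.card_primeFactors_le_ncard (z := z) (o := o) (by simp [z, o, Fin.ext_iff])
      hz (fun p hp => (hprime_mem p hp o).2 hs2) hone hn.ne'
  refine ⟨hprimes, hge, homega, ?_, fun m => ?_⟩
  · refine liminf_eq_of_eventually_ge_of_frequently_le (eventually_atTop.2 ⟨2, hge⟩) ?_
    exact (Nat.frequently_atTop_iff_infinite.2 Nat.infinite_setOfPred_prime).mono
      fun p hp => (hprimes p hp).le
  · obtain ⟨n, hn, rfl⟩ := Nat.exists_card_primeFactors_eq m
    exact ⟨n, homega n (Nat.pos_of_ne_zero hn)⟩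

/-- The construction achieving `(liminf, limsup) = (s, ∞)` for `2 ≤ s ≤ h`: let
`B 1 = ℕ` (positive integers), `B i = P ∪ {1}` for `2 ≤ i ≤ s`, and `B i = {1}` for
`i > s`.  Then `g p = s` for every prime `p`, `g n ≥ s` for all `n ≥ 2`, `g n` is at
least the number of distinct prime factors of `n`, `liminf g = s`, and `limsup g = ∞`
(i.e. `g` is unbounded). -/
theorem liminf_s_limsup_infty_construction (h s : ℕ) (hh : 2 ≤ h) (hs2 : 2 ≤ s)
    (hsh : s ≤ h)
    (B : Fin h → Set ℕ)
    (hB : ∀ i : Fin h, B i =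
      if (i : ℕ) = 0 then {m : ℕ | 0 < m}
      else if (i : ℕ) < s then {m : ℕ | m.Prime ∨ m = 1}
      else {1})
    (g : ℕ → ℕ)
    (hg : ∀ n, g n = {b : Fin h → ℕ | (∀ i, b i ∈ B i) ∧ ∏ i, b i = n}.ncard) :
    (∀ p : ℕ, p.Prime → g p = s) ∧
    (∀ n : ℕ, 2 ≤ n → s ≤ g n) ∧
    (∀ n : ℕ, 0 < n → n.primeFactors.card ≤ g n) ∧
    Filter.liminf g Filter.atTop = s ∧
    (∀ m : ℕ, ∃ n : ℕ, m ≤ g n) :=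
  liminf_s_limsup_infty_construction_general h s hs2 hsh B hB g hg
end

section
/- For h ≥ 2, let M(h) be the set of pairs (s,t) with s = liminf_{n→∞} g_𝓑(n) and t = limsup_{n→∞} g_𝓑(n) for some asymptotic multiplicative system 𝓑 = (B_1,...,B_h) of order h. Then M(h) = {(1,t) : t ∈ ℕ ∪ {∞}} ∪ {(s,∞) : s ∈ {2,...,h}}. -/
/-!
At a prime `p` every representation has the form `(1, …, p, …, 1)`, so `g(p) ≤ h` and the
liminf lies between `1` and `h`. The point is that a liminf `≥ 2` forces the limsup to be
infinite. If `2 ≤ g(n) ≤ T` for all large `n`, then `1` lies in every `Bᵢ` and every large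
prime in at least two of them. By Ramsey's theorem there is an infinite set `H` of large primes
such that whether a product of `s` distinct primes of `H` lies in `B_c` depends only on `s` and
`c` (for `s ≤ hT + 1`). A representation of a product of `hT + 1` primes of `H` puts some
`s > T` of them into one component `c`; by homogeneity, for any `s + 1` primes `F ⊆ H` the
factorizations `∏ (F \ {q}) · q`, with `q` in a second component containing the primes of `H`,
give `s + 1 > T` representations.

Conversely, `(ℕ₊, …, ℕ₊, {1}, …, {1})` with `s` copies of `ℕ₊` has `g(p) = s` at primes and
`g(2ᵏ) ≥ k + 1`, and `(ℕ₊, {2ᵏ : k < t}, {1}, …, {1})` has `g(n) = #{k < t : 2ᵏ ∣ n}`, which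
is `1` at odd `n` and reaches `t`.
-/

open Filter Finset

namespace MultiplicativeSystem

section Ramsey

variable {κ : Type*} [Finite κ]

theorem exists_infinite_monochromatic (r : ℕ) (C : Finset ℕ → κ) {S : Set ℕ}
    (hS : S.Infinite) :
    ∃ T ⊆ S, T.Infinite ∧ ∃ v, ∀ F : Finset ℕ, ↑F ⊆ T → #F = r → C F = v := by
  induction r generalizing C S with
  | zero => exact ⟨S, subset_rfl, hS, C ∅, fun F _ hF => by rw [card_eq_zero.mp hF]⟩
  | succ r ih =>
    have step : ∀ A : {A : Set ℕ // A.Infinite}, ∃ a ∈ A.1,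
        ∃ A' : {A' : Set ℕ // A'.Infinite}, A'.1 ⊆ A.1 ∩ Set.Ioi a ∧
          ∃ v, ∀ F : Finset ℕ, ↑F ⊆ A'.1 → #F = r → C (insert a F) = v := by
      rintro ⟨A, hA⟩
      obtain ⟨a, ha⟩ := hA.nonempty
      obtain ⟨A', hA'A, hA', v, hv⟩ :=
        ih (fun F => C (insert a F)) (hA.sdiff (Set.finite_Iic a))
      exact ⟨a, ha, ⟨A', hA'⟩,
        fun x hx => ⟨(hA'A hx).1, Set.mem_Ioi.mpr (lt_of_not_ge (hA'A hx).2)⟩, v, hv⟩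
    -- Iterating `step` gives `a₀ < a₁ < ⋯` such that the colour of `{aₙ} ∪ F`, for `F` among
    -- the later `aₘ`, depends only on `n`; then pigeonhole on these colours.
    choose head head_mem next next_sub col hcol using step
    let A : ℕ → {A : Set ℕ // A.Infinite} := fun n => next^[n] ⟨S, hS⟩
    have hA_succ (n : ℕ) : A (n + 1) = next (A n) := Function.iterate_succ_apply' _ _ _
    have hA_anti : Antitone fun n => (A n).1 := antitone_nat_of_succ_le fun n => by
      rw [hA_succ]; exact (next_sub _).trans Set.inter_subset_left
    have head_lt (n : ℕ) : head (A n) < head (A (n + 1)) := by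
      have := head_mem (A (n + 1))
      rw [hA_succ] at this ⊢
      exact (next_sub _ this).2
    have hmono : StrictMono fun n => head (A n) := strictMono_nat_of_lt_succ head_lt
    obtain ⟨u, hu⟩ := Finite.exists_infinite_fiber fun n => col (A n)
    refine ⟨(fun n => head (A n)) '' ((fun n => col (A n)) ⁻¹' {u}), ?_,
      (Set.infinite_coe_iff.mp hu).image hmono.injective.injOn, u, ?_⟩
    · rintro _ ⟨n, -, rfl⟩
      exact hA_anti (Nat.zero_le n) (head_mem _)
    · intro F hFT hF
      have hne : F.Nonempty := card_pos.mp (by omega)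
      obtain ⟨n, hn, hmin⟩ := hFT (F.min'_mem hne)
      dsimp only at hmin
      have herase : ↑(F.erase (F.min' hne)) ⊆ (next (A n)).1 := by
        intro y hy
        obtain ⟨m, -, rfl⟩ := hFT (mem_of_mem_erase hy)
        have hnm : n < m := hmono.lt_iff_lt.mp (hmin ▸ F.min'_lt_of_mem_erase_min' hne hy)
        rw [← hA_succ]
        exact hA_anti hnm (head_mem _)
      have := hcol (A n) _ herase (by rw [card_erase_of_mem (F.min'_mem hne), hF]; rfl)
      rwa [hmin, insert_erase (F.min'_mem hne), Set.mem_preimage.mp hn] at this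

theorem exists_infinite_homogeneous_le (C : Finset ℕ → κ) (K : ℕ) {S : Set ℕ}
    (hS : S.Infinite) :
    ∃ H ⊆ S, H.Infinite ∧
      ∀ F G : Finset ℕ, ↑F ⊆ H → ↑G ⊆ H → #F = #G → #F ≤ K → C F = C G := by
  induction K with
  | zero =>
    refine ⟨S, subset_rfl, hS, fun F G _ _ hFG hF => ?_⟩
    rw [card_eq_zero.mp (by omega : #F = 0), card_eq_zero.mp (by omega : #G = 0)]
  | succ K ih =>
    obtain ⟨H, hHS, hH, hhom⟩ := ih
    obtain ⟨H', hH'H, hH', v, hv⟩ := exists_infinite_monochromatic (K + 1) C hH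
    refine ⟨H', hH'H.trans hHS, hH', fun F G hF hG hFG hFK => ?_⟩
    rcases hFK.lt_or_eq with hlt | heq
    · exact hhom F G (hF.trans hH'H) (hG.trans hH'H) hFG (by omega)
    · rw [hv F hF heq, hv G hG (hFG ▸ heq)]

end Ramsey

section LimitsInENat

variable {α : Type*} {f : Filter α} {u : α → ℕ∞}

lemma liminf_eq_of_eventually_le_of_frequently_le {s : ℕ∞} (h₁ : ∀ᶠ n in f, s ≤ u n)
    (h₂ : ∃ᶠ n in f, u n ≤ s) : liminf u f = s :=
  le_antisymm (liminf_le_of_frequently_le h₂) (le_liminf_of_le (h := h₁))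

lemma limsup_eq_of_eventually_le_of_frequently_natCast_le {t : ℕ∞}
    (h₁ : ∀ᶠ n in f, u n ≤ t)
    (h₂ : ∀ m : ℕ, (m : ℕ∞) ≤ t → ∃ᶠ n in f, (m : ℕ∞) ≤ u n) :
    limsup u f = t :=
  le_antisymm (limsup_le_of_le (h := h₁))
    (ENat.forall_natCast_le_iff_le.mp fun m hm => le_limsup_of_frequently_le (h₂ m hm))

lemma one_le_iff_exists_pos_natCast_eq_or_eq_top {U : ℕ∞} :
    1 ≤ U ↔ (∃ t : ℕ, 0 < t ∧ U = t) ∨ U = ⊤ := by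
  induction U using ENat.recTopCoe with
  | top => simp
  | coe t => simp [Nat.one_le_iff_ne_zero, Nat.pos_iff_ne_zero]

end LimitsInENat

lemma frequently_atTop_prime : ∃ᶠ p : ℕ in atTop, p.Prime :=
  Nat.frequently_atTop_iff_infinite.mpr Nat.infinite_setOfPred_prime

lemma primeFactors_subset_and_prod_eq_of_dvd_prod {F : Finset ℕ} (hF : ∀ p ∈ F, p.Prime)
    {d : ℕ} (hd : d ∣ ∏ p ∈ F, p) :
    d.primeFactors ⊆ F ∧ ∏ p ∈ d.primeFactors, p = d := by
  have hsq : Squarefree (∏ p ∈ F, p) :=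
    squarefree_prod_of_pairwise_isCoprime (fun p hp q hq hpq => Nat.coprime_iff_isRelPrime.mp
      ((Nat.coprime_primes (hF p hp) (hF q hq)).mpr hpq)) fun p hp => (hF p hp).prime.squarefree
  refine ⟨?_, Nat.prod_primeFactors_of_squarefree (hsq.squarefree_of_dvd hd)⟩
  calc d.primeFactors ⊆ (∏ p ∈ F, p).primeFactors := Nat.primeFactors_mono hd hsq.ne_zero
    _ = F := Nat.primeFactors_prod hF

variable {ι : Type*}

section Systems

variable [DecidableEq ι] {i j : ι} {t : ℕ∞}

def fullSystem (I : Finset ι) : ι → Set ℕ := fun c => if c ∈ I then {m | 0 < m} else {1}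

lemma fullSystem_pos (I : Finset ι) : ∀ c, ∀ b ∈ fullSystem I c, 0 < b := by
  intro c b hb
  unfold fullSystem at hb
  split_ifs at hb
  · exact hb
  · simp [Set.mem_singleton_iff.mp hb]

lemma fullSystem_of_mem {I : Finset ι} (hi : i ∈ I) : fullSystem I i = {m | 0 < m} := by
  simp [fullSystem, hi]

lemma one_mem_fullSystem (I : Finset ι) (c : ι) : 1 ∈ fullSystem I c := by
  unfold fullSystem; split_ifs <;> simp

def twoAdicSystem (i j : ι) (t : ℕ∞) : ι → Set ℕ := fun c =>
  if c = i then {m | 0 < m} else if c = j then (2 ^ ·) '' {k : ℕ | (k : ℕ∞) < t} else {1}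

lemma twoAdicSystem_apply_left : twoAdicSystem i j t i = {m | 0 < m} := by
  simp [twoAdicSystem]

lemma twoAdicSystem_apply_right (hij : i ≠ j) :
    twoAdicSystem i j t j = (2 ^ ·) '' {k : ℕ | (k : ℕ∞) < t} := by
  simp [twoAdicSystem, hij.symm]

lemma twoAdicSystem_apply_of_ne {c : ι} (hci : c ≠ i) (hcj : c ≠ j) :
    twoAdicSystem i j t c = {1} := by
  simp [twoAdicSystem, hci, hcj]

lemma twoAdicSystem_pos (hij : i ≠ j) : ∀ c, ∀ b ∈ twoAdicSystem i j t c, 0 < b := by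
  intro c b hb
  rcases eq_or_ne c i with rfl | hci
  · rwa [twoAdicSystem_apply_left] at hb
  rcases eq_or_ne c j with rfl | hcj
  · obtain ⟨k, -, rfl⟩ := (twoAdicSystem_apply_right hij) ▸ hb
    positivity
  · rw [twoAdicSystem_apply_of_ne hci hcj] at hb
    simp [Set.mem_singleton_iff.mp hb]

end Systems

variable [Fintype ι]

/-- `g_𝓑(n)` is `(reps B n).ncard`. -/
def reps (B : ι → Set ℕ) (n : ℕ) : Set (ι → ℕ) :=
  {b | (∀ i, b i ∈ B i) ∧ ∏ i, b i = n}

variable {B : ι → Set ℕ}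

lemma reps_finite (hpos : ∀ i, ∀ b ∈ B i, 0 < b) (n : ℕ) : (reps B n).Finite := by
  refine (Set.Finite.pi fun _ => n.divisors.finite_toSet).subset ?_
  rintro b ⟨hb, rfl⟩ i -
  exact Nat.mem_divisors.mpr ⟨dvd_prod_of_mem b (mem_univ i),
    (prod_pos fun j _ => hpos j _ (hb j)).ne'⟩

lemma reps_prime_subset [DecidableEq ι] {p : ℕ} (hp : p.Prime) :
    reps B p ⊆ (fun i => Pi.mulSingle i p) '' {i | p ∈ B i} := by
  rintro b ⟨hb, hprod⟩
  obtain ⟨i, -, hpi⟩ := (hp.prime.dvd_finsetProd_iff b).mp (dvd_of_eq hprod.symm)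
  have hbi : b i = p :=
    Nat.dvd_antisymm (hprod ▸ dvd_prod_of_mem b (mem_univ i)) hpi
  have hrest : ∏ c ∈ univ.erase i, b c = 1 := by
    apply Nat.eq_of_mul_eq_mul_left hp.pos
    rw [← hbi, mul_prod_erase _ _ (mem_univ i), hprod, hbi, mul_one]
  refine ⟨i, hbi ▸ hb i, funext fun c => ?_⟩
  rcases eq_or_ne c i with rfl | hci
  · simp [hbi]
  · change (Pi.mulSingle i p : ι → ℕ) c = b c
    rw [Pi.mulSingle_eq_of_ne hci, eq_comm, ← Nat.dvd_one, ← hrest]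
    exact dvd_prod_of_mem b (mem_erase.mpr ⟨hci, mem_univ c⟩)

lemma ncard_reps_prime_le {p : ℕ} (hp : p.Prime) :
    (reps B p).ncard ≤ {i | p ∈ B i}.ncard := by
  classical
  exact (Set.ncard_le_ncard (reps_prime_subset hp) ((Set.toFinite _).image _)).trans
    (Set.ncard_image_le (Set.toFinite _))

lemma one_mem_and_exists_ne_of_two_le_ncard_reps_prime {p : ℕ} (hp : p.Prime)
    (h2 : 2 ≤ (reps B p).ncard) :
    (∀ c, 1 ∈ B c) ∧ ∃ i j, i ≠ j ∧ p ∈ B i ∧ p ∈ B j := by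
  classical
  obtain ⟨b, b', hb, hb', hne⟩ :=
    (Set.one_lt_ncard_iff (Set.finite_of_ncard_pos (s := reps B p) (by omega))).mp (by omega)
  obtain ⟨i, hi, rfl⟩ := reps_prime_subset hp hb
  obtain ⟨j, hj, rfl⟩ := reps_prime_subset hp hb'
  have hij : i ≠ j := by rintro rfl; exact hne rfl
  refine ⟨fun c => ?_, i, j, hij, hi, hj⟩
  rcases eq_or_ne c i with rfl | hci
  · simpa [hij] using hb'.1 c
  · simpa [hci] using hb.1 c

section Pairs

variable [DecidableEq ι] {i j : ι}

lemma mulSingle_mem_reps {x : ℕ} (hx : x ∈ B i) (h1 : ∀ c, c ≠ i → 1 ∈ B c) :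
    Pi.mulSingle i x ∈ reps B x := by
  refine ⟨fun c => ?_, Fintype.prod_pi_mulSingle' i x⟩
  rcases eq_or_ne c i with rfl | hci
  · simpa using hx
  · simpa [hci] using h1 c hci

lemma mulSingle_mul_mulSingle_mem_reps (hij : i ≠ j) {x y : ℕ} (hx : x ∈ B i) (hy : y ∈ B j)
    (h1 : ∀ c, c ≠ i → c ≠ j → 1 ∈ B c) :
    Pi.mulSingle i x * Pi.mulSingle j y ∈ reps B (x * y) := by
  refine ⟨fun c => ?_, ?_⟩
  · rcases eq_or_ne c i with rfl | hci
    · simpa [hij] using hx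
    rcases eq_or_ne c j with rfl | hcj
    · simpa [hci] using hy
    simpa [hci, hcj] using h1 c hci hcj
  · simp [prod_mul_distrib]

lemma ncard_le_ncard_reps_of_forall_dvd {n : ℕ} (hfin : (reps B n).Finite) (hij : i ≠ j)
    (h1 : ∀ c, c ≠ i → c ≠ j → 1 ∈ B c) {D : Set ℕ}
    (hD : ∀ d ∈ D, d ∣ n ∧ n / d ∈ B i ∧ d ∈ B j) : D.ncard ≤ (reps B n).ncard := by
  refine Set.ncard_le_ncard_of_injOn (fun d => Pi.mulSingle i (n / d) * Pi.mulSingle j d)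
    (fun d hd => ?_) (fun d _ d' _ h => by simpa [hij.symm] using congrFun h j) hfin
  have := mulSingle_mul_mulSingle_mem_reps hij (hD d hd).2.1 (hD d hd).2.2 h1
  rwa [Nat.div_mul_cancel (hD d hd).1] at this

lemma ncard_reps_le_ncard_dvd {n : ℕ} (hn : n ≠ 0) (hij : i ≠ j) (hj : ∀ d ∈ B j, 0 < d)
    (hB : ∀ c, c ≠ i → c ≠ j → B c ⊆ {1}) :
    (reps B n).ncard ≤ {d ∈ B j | d ∣ n}.ncard := by
  have hfin : {d ∈ B j | d ∣ n}.Finite :=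
    n.divisors.finite_toSet.subset fun d hd => Nat.mem_divisors.mpr ⟨hd.2, hn⟩
  refine (Set.ncard_le_ncard (t := (fun d => Pi.mulSingle i (n / d) * Pi.mulSingle j d) '' _) ?_
    (hfin.image _)).trans (Set.ncard_image_le hfin)
  rintro b ⟨hb, hprod⟩
  have hone (c : ι) (hci : c ≠ i) (hcj : c ≠ j) : b c = 1 := hB c hci hcj (hb c)
  have hn : b i * b j = n := by
    rw [← hprod, prod_eq_mul i j hij (fun c _ hc => hone c hc.1 hc.2) (by simp) (by simp)]
  have hdiv : n / b j = b i := by rw [← hn, Nat.mul_div_cancel _ (hj _ (hb j))]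
  refine ⟨b j, ⟨hb j, hn ▸ dvd_mul_left _ _⟩, funext fun c => ?_⟩
  rcases eq_or_ne c i with rfl | hci
  · simp [hij, hdiv]
  rcases eq_or_ne c j with rfl | hcj
  · simp [hci]
  · simp [hci, hcj, hone c hci hcj]

end Pairs

lemma exists_lt_card_subset_prod_mem_of_mem_reps {F : Finset ℕ} (hF : ∀ p ∈ F, p.Prime)
    {b : ι → ℕ} (hb : b ∈ reps B (∏ p ∈ F, p)) {T : ℕ}
    (hT : Fintype.card ι * T < #F) :
    ∃ c, ∃ S ⊆ F, T < #S ∧ ∏ p ∈ S, p ∈ B c := by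
  classical
  have hdvd (c : ι) : b c ∣ ∏ p ∈ F, p := hb.2 ▸ dvd_prod_of_mem b (mem_univ c)
  have hne : ∏ p ∈ F, p ≠ 0 := prod_ne_zero_iff.mpr fun p hp => (hF p hp).ne_zero
  have hcover : F ⊆ univ.biUnion fun c => (b c).primeFactors := by
    intro p hp
    obtain ⟨c, -, hpc⟩ :=
      ((hF p hp).prime.dvd_finsetProd_iff b).mp (hb.2 ▸ dvd_prod_of_mem _ hp)
    exact mem_biUnion.mpr ⟨c, mem_univ c, Nat.mem_primeFactors.mpr
      ⟨hF p hp, hpc, ne_zero_of_dvd_ne_zero hne (hdvd c)⟩⟩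
  obtain ⟨c, -, hc⟩ : ∃ c ∈ univ, T < #(b c).primeFactors := by
    refine exists_lt_of_sum_lt ?_
    calc ∑ _c : ι, T = Fintype.card ι * T := by simp
      _ < #F := hT
      _ ≤ _ := (card_le_card hcover).trans card_biUnion_le
  obtain ⟨hsub, hprod⟩ := primeFactors_subset_and_prod_eq_of_dvd_prod hF (hdvd c)
  exact ⟨c, _, hsub, hc, by rw [hprod]; exact hb.1 c⟩

lemma exists_infinite_primes_homogeneous (B : ι → Set ℕ) (N K : ℕ) :
    ∃ H : Set ℕ, H.Infinite ∧ (∀ p ∈ H, p.Prime ∧ N ≤ p) ∧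
      ∀ F G : Finset ℕ, ↑F ⊆ H → ↑G ⊆ H → #F = #G → #F ≤ K →
        ∀ c, ∏ p ∈ F, p ∈ B c → ∏ p ∈ G, p ∈ B c := by
  have hP : {p | p.Prime ∧ N ≤ p}.Infinite :=
    (Nat.infinite_setOfPred_prime.sdiff (Set.finite_Iio N)).mono fun p hp =>
      ⟨hp.1, not_lt.mp hp.2⟩
  obtain ⟨H, hHP, hH, hhom⟩ :=
    exists_infinite_homogeneous_le (fun F : Finset ℕ => {c | ∏ p ∈ F, p ∈ B c}) K hP
  exact ⟨H, hH, fun p hp => hHP hp, fun F G hF hG hFG hFK c =>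
    (Set.ext_iff.mp (hhom F G hF hG hFG hFK) c).mp⟩

theorem frequently_le_ncard_reps (hpos : ∀ i, ∀ b ∈ B i, 0 < b)
    (h2 : ∀ᶠ n in atTop, 2 ≤ (reps B n).ncard) (T : ℕ) :
    ∃ᶠ n in atTop, T ≤ (reps B n).ncard := by
  classical
  by_contra hbdd
  obtain ⟨N, hN⟩ := eventually_atTop.mp (h2.and (not_frequently.mp hbdd))
  set K := Fintype.card ι * T + 1
  obtain ⟨H, hH, hHP, hmem⟩ := exists_infinite_primes_homogeneous B N K
  have hprime (p : ℕ) (hp : p ∈ H) : p.Prime := (hHP p hp).1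
  have hcount (F : Finset ℕ) (hFH : ↑F ⊆ H) (hF : F.Nonempty) :
      2 ≤ (reps B (∏ p ∈ F, p)).ncard ∧ ¬ T ≤ (reps B (∏ p ∈ F, p)).ncard := by
    obtain ⟨q, hq⟩ := hF
    refine hN _ ((hHP q (hFH hq)).2.trans (Nat.le_of_dvd ?_ (dvd_prod_of_mem _ hq)))
    exact prod_pos fun p hp => (hprime p (hFH hp)).pos
  obtain ⟨q, hq⟩ := hH.nonempty
  obtain ⟨hone, i, i', hii', hqi, hqi'⟩ := one_mem_and_exists_ne_of_two_le_ncard_reps_prime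
    (hprime q hq) (by simpa using (hcount {q} (by simpa) (singleton_nonempty q)).1)
  have hsingle (p : ℕ) (hp : p ∈ H) (c : ι) (hc : q ∈ B c) : p ∈ B c := by
    simpa using hmem {q} {p} (by simpa) (by simpa) rfl (by simp [K]) c (by simpa)
  obtain ⟨F, hFH, hF⟩ := hH.exists_subset_card_eq K
  obtain ⟨b, hb⟩ : (reps B (∏ p ∈ F, p)).Nonempty := Set.nonempty_of_ncard_ne_zero
    (by have := (hcount F hFH (card_pos.mp (by omega))).1; omega)
  obtain ⟨c, S, hSF, hTS, hSc⟩ := exists_lt_card_subset_prod_mem_of_mem_reps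
    (fun p hp => hprime p (hFH hp)) hb (T := T) (by omega)
  obtain ⟨c', hc'c, hc'⟩ : ∃ c' ≠ c, q ∈ B c' := by
    by_cases hic : i = c
    · exact ⟨i', hic ▸ hii'.symm, hqi'⟩
    · exact ⟨i, hic, hqi⟩
  obtain ⟨F', hF'H, hF'⟩ := hH.exists_subset_card_eq (#S + 1)
  -- By homogeneity each `∏ (F' \ {j})` lies in `B c` like `∏ S`, and each `j` lies in `B c'`
  -- like `q`: the factorizations `∏ (F' \ {j}) · j` give `#S + 1 > T` representations.
  have hshift := ncard_le_ncard_reps_of_forall_dvd (D := ↑F') (reps_finite hpos _) hc'c.symm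
    (fun d _ _ => hone d) fun j hj => ⟨dvd_prod_of_mem _ hj, ?_, hsingle j (hF'H hj) c' hc'⟩
  · rw [Set.ncard_coe_finset] at hshift
    have := (hcount F' hF'H (card_pos.mp (by omega))).2
    omega
  rw [← prod_erase_mul F' (fun p => p) hj, Nat.mul_div_cancel _ (hprime j (hF'H hj)).pos]
  exact hmem S (F'.erase j) ((coe_subset.mpr hSF).trans hFH)
    ((coe_subset.mpr (erase_subset j F')).trans hF'H) (by rw [card_erase_of_mem hj]; omega)
    ((card_le_card hSF).trans hF.le) c hSc

theorem liminf_limsup_cases (hpos : ∀ i, ∀ b ∈ B i, 0 < b)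
    (h₁ : ∀ᶠ n in atTop, 1 ≤ (reps B n).ncard) :
    (liminf (fun n => ((reps B n).ncard : ℕ∞)) atTop = 1 ∧
        1 ≤ limsup (fun n => ((reps B n).ncard : ℕ∞)) atTop) ∨
      (2 ≤ liminf (fun n => ((reps B n).ncard : ℕ∞)) atTop ∧
        liminf (fun n => ((reps B n).ncard : ℕ∞)) atTop ≤ Fintype.card ι ∧
        limsup (fun n => ((reps B n).ncard : ℕ∞)) atTop = ⊤) := by
  set g : ℕ → ℕ∞ := fun n => ((reps B n).ncard : ℕ∞)
  have hL₁ : 1 ≤ liminf g atTop :=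
    le_liminf_of_le (h := h₁.mono fun _ hn => Nat.one_le_cast.mpr hn)
  rcases hL₁.eq_or_lt with hL | hL
  · exact Or.inl ⟨hL.symm, hL₁.trans liminf_le_limsup⟩
  have h₂ : ∀ᶠ n in atTop, 2 ≤ (reps B n).ncard :=
    (eventually_lt_of_lt_liminf hL).mono fun _ hn => Nat.one_lt_cast.mp hn
  refine Or.inr ⟨by simpa [one_add_one_eq_two] using Order.add_one_le_of_lt hL, ?_, ?_⟩
  · refine liminf_le_of_frequently_le (frequently_atTop_prime.mono fun p hp => ?_)
    have := (ncard_reps_prime_le (B := B) hp).trans (Set.ncard_le_card _)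
    rw [Nat.card_eq_fintype_card] at this
    exact Nat.cast_le.mpr this
  · exact limsup_eq_of_eventually_le_of_frequently_natCast_le (.of_forall fun _ => le_top)
      fun m _ => (frequently_le_ncard_reps hpos h₂ m).mono fun _ hn => Nat.cast_le.mpr hn

section Constructions

variable [DecidableEq ι] {i j : ι} {t : ℕ∞}

lemma card_le_ncard_reps_fullSystem (I : Finset ι) {n : ℕ} (hn : 2 ≤ n) :
    #I ≤ (reps (fullSystem I) n).ncard := by
  rw [← Set.ncard_coe_finset]
  refine Set.ncard_le_ncard_of_injOn (fun i => Pi.mulSingle i n) (fun i hi => ?_)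
    (fun i _ i' _ h => ?_) (reps_finite (fullSystem_pos I) n)
  · refine mulSingle_mem_reps ?_ fun c _ => one_mem_fullSystem I c
    rw [fullSystem_of_mem (Finset.mem_coe.mp hi)]
    exact Nat.zero_lt_of_lt hn
  · by_contra hii'
    have := congrFun h i
    simp [Ne.symm hii'] at this
    omega

lemma ncard_reps_fullSystem_prime_le (I : Finset ι) {p : ℕ} (hp : p.Prime) :
    (reps (fullSystem I) p).ncard ≤ #I := by
  have hI : {c | p ∈ fullSystem I c} = ↑I := by
    ext c
    by_cases hc : c ∈ I <;> simp [fullSystem, hc, hp.pos, hp.one_lt.ne']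
  simpa [hI] using ncard_reps_prime_le (B := fullSystem I) hp

lemma card_divisors_le_ncard_reps_fullSystem {I : Finset ι} (hI : 2 ≤ #I) (n : ℕ) :
    #n.divisors ≤ (reps (fullSystem I) n).ncard := by
  obtain ⟨i, hi, j, hj, hij⟩ := one_lt_card.mp hI
  rw [← Set.ncard_coe_finset]
  refine ncard_le_ncard_reps_of_forall_dvd (reps_finite (fullSystem_pos I) n) hij
    (fun c _ _ => one_mem_fullSystem I c) fun d hd => ?_
  rw [fullSystem_of_mem hi, fullSystem_of_mem hj]
  exact ⟨Nat.dvd_of_mem_divisors hd,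
    Nat.div_pos (Nat.divisor_le hd) (Nat.pos_of_mem_divisors hd), Nat.pos_of_mem_divisors hd⟩

theorem fullSystem_spec {I : Finset ι} (hI : 2 ≤ #I) :
    (∀ n, 2 ≤ n → 1 ≤ (reps (fullSystem I) n).ncard) ∧
      liminf (fun n => ((reps (fullSystem I) n).ncard : ℕ∞)) atTop = #I ∧
      limsup (fun n => ((reps (fullSystem I) n).ncard : ℕ∞)) atTop = ⊤ := by
  refine ⟨fun n hn => (by omega : 1 ≤ #I).trans (card_le_ncard_reps_fullSystem I hn), ?_, ?_⟩
  · exact liminf_eq_of_eventually_le_of_frequently_le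
      (eventually_atTop.mpr ⟨2, fun n hn => Nat.cast_le.mpr
        (card_le_ncard_reps_fullSystem I hn)⟩)
      (frequently_atTop_prime.mono fun p hp => Nat.cast_le.mpr
        (ncard_reps_fullSystem_prime_le I hp))
  · refine limsup_eq_of_eventually_le_of_frequently_natCast_le (.of_forall fun _ => le_top)
      fun m _ => frequently_atTop.mpr fun a => ⟨2 ^ (a + m), ?_, Nat.cast_le.mpr ?_⟩
    · exact (Nat.lt_two_pow_self.trans_le (Nat.pow_le_pow_right two_pos (by omega))).le
    · refine le_trans ?_ (card_divisors_le_ncard_reps_fullSystem hI _)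
      rw [Nat.divisors_prime_pow Nat.prime_two, card_map, card_range]
      omega

lemma le_ncard_reps_twoAdicSystem (hij : i ≠ j) {n : ℕ} (hn : n ≠ 0) {m : ℕ}
    (hm : (m : ℕ∞) ≤ t) (hdvd : ∀ k < m, 2 ^ k ∣ n) :
    m ≤ (reps (twoAdicSystem i j t) n).ncard := by
  have := ncard_le_ncard_reps_of_forall_dvd (D := ↑((range m).image (2 ^ ·)))
    (reps_finite (twoAdicSystem_pos (t := t) hij) n) hij
    (fun c hci hcj => by simp [twoAdicSystem_apply_of_ne hci hcj]) fun d hd => ?_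
  · rwa [Set.ncard_coe_finset, card_image_of_injective _ (Nat.pow_right_injective le_rfl),
      card_range] at this
  obtain ⟨k, hk, rfl⟩ := mem_image.mp hd
  have hkn : 2 ^ k ∣ n := hdvd k (mem_range.mp hk)
  refine ⟨hkn, ?_, ?_⟩
  · rw [twoAdicSystem_apply_left]
    exact Nat.div_pos (Nat.le_of_dvd (Nat.pos_of_ne_zero hn) hkn) (by positivity)
  · rw [twoAdicSystem_apply_right hij]
    exact ⟨k, (Nat.cast_lt.mpr (mem_range.mp hk)).trans_le hm, rfl⟩

lemma ncard_reps_twoAdicSystem_le (hij : i ≠ j) {n : ℕ} (hn : n ≠ 0) {D : Set ℕ}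
    (hD : D.Finite) (hsub : ∀ k : ℕ, (k : ℕ∞) < t → 2 ^ k ∣ n → 2 ^ k ∈ D) :
    (reps (twoAdicSystem i j t) n).ncard ≤ D.ncard := by
  refine (ncard_reps_le_ncard_dvd hn hij (twoAdicSystem_pos hij j)
    fun c hci hcj => (twoAdicSystem_apply_of_ne hci hcj).le).trans (Set.ncard_le_ncard ?_ hD)
  rintro _ ⟨hd, hdn⟩
  rw [twoAdicSystem_apply_right hij] at hd
  obtain ⟨k, hk, rfl⟩ := hd
  exact hsub k hk hdn

theorem twoAdicSystem_spec (hij : i ≠ j) (ht : 1 ≤ t) :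
    (∀ n, 1 ≤ n → 1 ≤ (reps (twoAdicSystem i j t) n).ncard) ∧
      liminf (fun n => ((reps (twoAdicSystem i j t) n).ncard : ℕ∞)) atTop = 1 ∧
      limsup (fun n => ((reps (twoAdicSystem i j t) n).ncard : ℕ∞)) atTop = t := by
  have hlow (n : ℕ) (hn : 1 ≤ n) : 1 ≤ (reps (twoAdicSystem i j t) n).ncard :=
    le_ncard_reps_twoAdicSystem hij (by omega) (by simpa using ht)
      fun k hk => by simp [Nat.lt_one_iff.mp hk]
  refine ⟨hlow, ?_, ?_⟩
  · refine liminf_eq_of_eventually_le_of_frequently_le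
      (eventually_atTop.mpr ⟨1, fun n hn => Nat.one_le_cast.mpr (hlow n hn)⟩)
      (frequently_atTop.mpr fun a => ⟨2 * a + 1, by omega, ?_⟩)
    have := ncard_reps_twoAdicSystem_le (t := t) hij (n := 2 * a + 1) (by omega)
      (Set.finite_singleton 1) fun k _ hk => ?_
    · simpa using this
    · rcases k with _ | k
      · rfl
      · exact absurd ((dvd_pow_self 2 k.succ_ne_zero).trans hk) (by omega)
  · refine limsup_eq_of_eventually_le_of_frequently_natCast_le ?_ fun m hm =>
      frequently_atTop.mpr fun a => ⟨2 ^ m * (a + 1), ?_, ?_⟩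
    · induction t using ENat.recTopCoe with
      | top => exact .of_forall fun _ => le_top
      | coe t =>
        refine eventually_atTop.mpr ⟨1, fun n hn => Nat.cast_le.mpr ?_⟩
        have := ncard_reps_twoAdicSystem_le (t := t) hij (n := n) (by omega)
          ((range t).image (2 ^ ·)).finite_toSet fun k hk _ =>
            mem_image_of_mem _ (mem_range.mpr (Nat.cast_lt.mp hk))
        rwa [Set.ncard_coe_finset, card_image_of_injective _ (Nat.pow_right_injective le_rfl),
          card_range] at this
    · exact le_mul_of_one_le_of_le Nat.one_le_two_pow (by omega)
    · exact Nat.cast_le.mpr (le_ncard_reps_twoAdicSystem hij (by positivity) hm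
        fun k hk => (pow_dvd_pow 2 hk.le).trans (dvd_mul_right _ _))

end Constructions

end MultiplicativeSystem

open MultiplicativeSystem

/-- Nathanson's theorem: for `h ≥ 2`, the set of pairs
`(liminf g_𝓑, limsup g_𝓑)` (computed in `ℕ∞`) over all asymptotic multiplicative
systems `𝓑 = (B 1, …, B h)` of order `h` equals
`{(1,t) : t ∈ ℕ ∪ {∞}} ∪ {(s,∞) : 2 ≤ s ≤ h}`. -/
theorem nathanson_multiplicative_systems (h : ℕ) (hh : 2 ≤ h) :
    {p : ℕ∞ × ℕ∞ | ∃ B : Fin h → Set ℕ,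
      (∀ i, ∀ b ∈ B i, 0 < b) ∧
      (∃ N : ℕ, ∀ n : ℕ, N ≤ n →
        1 ≤ {b : Fin h → ℕ | (∀ i, b i ∈ B i) ∧ ∏ i, b i = n}.ncard) ∧
      p.1 = liminf (fun n : ℕ =>
        ({b : Fin h → ℕ | (∀ i, b i ∈ B i) ∧ ∏ i, b i = n}.ncard : ℕ∞)) atTop ∧
      p.2 = limsup (fun n : ℕ =>
        ({b : Fin h → ℕ | (∀ i, b i ∈ B i) ∧ ∏ i, b i = n}.ncard : ℕ∞)) atTop} =
    {p : ℕ∞ × ℕ∞ |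
      (p.1 = 1 ∧ ((∃ t : ℕ, 0 < t ∧ p.2 = t) ∨ p.2 = ⊤)) ∨
      (∃ s : ℕ, 2 ≤ s ∧ s ≤ h ∧ p.1 = s ∧ p.2 = ⊤)} := by
  ext ⟨L, U⟩
  constructor
  · rintro ⟨B, hpos, ⟨N, hN⟩, hL, hU⟩
    change L = liminf (fun n => ((reps B n).ncard : ℕ∞)) atTop at hL
    change U = limsup (fun n => ((reps B n).ncard : ℕ∞)) atTop at hU
    have hcases := liminf_limsup_cases hpos (eventually_atTop.mpr ⟨N, hN⟩)
    rw [← hL, ← hU, Fintype.card_fin] at hcases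
    clear hL hU
    rcases hcases with ⟨rfl, hU⟩ | ⟨hL, hLh, rfl⟩
    · exact Or.inl ⟨rfl, one_le_iff_exists_pos_natCast_eq_or_eq_top.mp hU⟩
    · lift L to ℕ using ne_top_of_le_ne_top (ENat.natCast_ne_top h) hLh
      exact Or.inr ⟨L, by exact_mod_cast hL, by exact_mod_cast hLh, rfl, rfl⟩
  · rintro (⟨rfl, hU⟩ | ⟨s, hs, hsh, rfl, rfl⟩)
    · have hij : (⟨0, by omega⟩ : Fin h) ≠ ⟨1, by omega⟩ := by simp
      obtain ⟨hN, hL, hU⟩ :=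
        twoAdicSystem_spec hij (one_le_iff_exists_pos_natCast_eq_or_eq_top.mpr hU)
      exact ⟨_, twoAdicSystem_pos hij, ⟨1, hN⟩, hL.symm, hU.symm⟩
    · have hI : #{i : Fin h | i < s} = s := by simp [Fin.card_filter_val_lt, hsh]
      obtain ⟨hN, hL, hU⟩ := fullSystem_spec (hI ▸ hs)
      exact ⟨_, fullSystem_pos _, ⟨2, hN⟩, (hL.trans (congrArg _ hI)).symm, hU.symm⟩
end
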